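/- arXiv:math/0310249 — 5 statements merged into one kernel-verified Lean document; each statement's English description precedes it below -/
import Mathlib

section
/- Let N = 2. For m ≥ n, the polynomial f_{mn} satisfies D_1(x_1 f_{mn}) = (κ + m + 1) f_{mn} and D_2(x_2 f_{mn}) − κ·(1,2)f_{mn} = (n + 1) f_{mn}, where (1,2) interchanges the variables x_1 and x_2. -/
/-!
Write `f_{mn} = (x₀x₁)ⁿ ∑_{j ≤ M} c_j x₀^{M-j} x₁^j` with `M = m - n` and `c_j = a_{M-j} b_j`,
where `b_j = (κ)_j / j!` and `a_k = (κ+1)_k / k!` are the coefficients of `(1 - t)^{-κ}` and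
`(1 - t)^{-κ-1}`. Clearing the denominator `x₀ - x₁`, both equations become polynomial
identities. With `W = (x₀x₁)ⁿ ∑ j c_j x₀^{M-j} x₁^j` one has `x₀∂₀f = m f - W` and
`x₁∂₁f = n f + W`, and both identities reduce to `(x₀ - x₁) W = κ x₁ (f - (1,2)f)`. Comparing
coefficients, this is the recursion `(j+1) c_{j+1} = (κ+j) c_j - κ c_{M-j}`, a consequence of
`(j+1) b_{j+1} = (κ+j) b_j = κ a_j` and `a_{k+1} = a_k + b_{k+1}`.
-/

open MvPolynomial

noncomputable section

/-- Pochhammer symbol `(a)_j = a(a+1)⋯(a+j−1)`. -/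
def poch (a : ℝ) (j : ℕ) : ℝ := (ascPochhammer ℝ j).eval a

/-- The coefficient of `s^a` in `∏ᵢ (1 − s xᵢ)^{−κ}`, namely
`∑_{|α|=a} ∏ᵢ ((κ)_{αᵢ}/αᵢ!) x^α`, obtained as the degree-`a` homogeneous
component of the suitably truncated product of binomial series. -/
def genCoeff (σ : Type) [Fintype σ] [DecidableEq σ] (κ : ℝ) (a : ℕ) : MvPolynomial σ ℝ :=
  MvPolynomial.homogeneousComponent a
    (∏ i : σ, ∑ k ∈ Finset.range (a + 1), C (poch κ k / (Nat.factorial k : ℝ)) * X i ^ k)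

/-- The polynomials `p_{mn}`, defined by the generating function
`∑ p_{mn} s^m t^n = (1−s x₁)⁻¹ (1−t x₂)⁻¹ ∏ᵢ ((1−s xᵢ)(1−t xᵢ))^{−κ}`;
here `x1`, `x2` are the distinguished first and second variables. -/
def ppoly (σ : Type) [Fintype σ] [DecidableEq σ] (x1 x2 : σ) (κ : ℝ) (m n : ℕ) :
    MvPolynomial σ ℝ :=
  (∑ a ∈ Finset.range (m + 1), X x1 ^ (m - a) * genCoeff σ κ a) *
  (∑ b ∈ Finset.range (n + 1), X x2 ^ (n - b) * genCoeff σ κ b)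

/-- `ω_{mn}` for `m ≥ n`. -/
def omegaAux (σ : Type) [Fintype σ] [DecidableEq σ] (x1 x2 : σ) (κ : ℝ) (m n : ℕ) :
    MvPolynomial σ ℝ :=
  ppoly σ x1 x2 κ m n +
  ∑ j ∈ Finset.Icc 1 n,
    (poch (-κ) j * poch ((m : ℝ) - n + 1) (j - 1) /
        (poch (κ + (m : ℝ) - n + 1) j * (Nat.factorial j : ℝ))) •
      (((m : ℝ) - n + j) • ppoly σ x1 x2 κ (m + j) (n - j) +
        (j : ℝ) • ppoly σ x1 x2 κ (n - j) (m + j))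

/-- `ω_{mn}` for all `m, n`: for `m ≥ n` by the explicit formula, and
`ω_{nm} = (1,2) ω_{mn}`. -/
def omegaP (σ : Type) [Fintype σ] [DecidableEq σ] (x1 x2 : σ) (κ : ℝ) (m n : ℕ) :
    MvPolynomial σ ℝ :=
  if n ≤ m then omegaAux σ x1 x2 κ m n
  else rename (Equiv.swap x1 x2) (omegaAux σ x1 x2 κ n m)

/-- The Dunkl operator `D_i f = ∂f/∂xᵢ + κ ∑_{j≠i} (f − (i,j)f)/(xᵢ−xⱼ)`, with values
in the fraction field of the polynomial ring (the result is actually a polynomial since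
`f − (i,j)f` is divisible by `xᵢ − xⱼ`). -/
def dunkl (σ : Type) [Fintype σ] [DecidableEq σ] (κ : ℝ) (i : σ) (f : MvPolynomial σ ℝ) :
    FractionRing (MvPolynomial σ ℝ) :=
  algebraMap (MvPolynomial σ ℝ) (FractionRing (MvPolynomial σ ℝ)) (pderiv i f) +
  algebraMap (MvPolynomial σ ℝ) (FractionRing (MvPolynomial σ ℝ)) (C κ) *
    ∑ j ∈ Finset.univ.erase i,
      algebraMap (MvPolynomial σ ℝ) (FractionRing (MvPolynomial σ ℝ))
          (f - rename (Equiv.swap i j) f) /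
        algebraMap (MvPolynomial σ ℝ) (FractionRing (MvPolynomial σ ℝ)) (X i - X j)

/-- The polynomials `q_{mn}`, defined by
`∑ q_{mn} u^m v^n = ∑ p_{ij} (u+v)^i (u−v)^j`; explicitly
`q_{mn} = ∑_{i+j=m+n} p_{ij} · (coeff of u^m v^n in (u+v)^i (u−v)^j)`. -/
def qpoly (σ : Type) [Fintype σ] [DecidableEq σ] (x1 x2 : σ) (κ : ℝ) (m n : ℕ) :
    MvPolynomial σ ℝ :=
  ∑ i ∈ Finset.range (m + n + 1),
    (∑ a ∈ Finset.range (m + 1),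
        (i.choose a : ℝ) * ((m + n - i).choose (m - a) : ℝ) *
          (-1 : ℝ) ^ ((m + n - i) - (m - a))) •
      ppoly σ x1 x2 κ i (m + n - i)

/-- The symmetric Krawtchouk polynomial `K_m(t;n)` with parameters `(n, 1/2)`. -/
def kraw (n m : ℕ) (t : ℝ) : ℝ :=
  ((n.choose m : ℝ))⁻¹ *
    ∑ j ∈ Finset.range (m + 1),
      (-1 : ℝ) ^ (m - j) * poch (t - n) (m - j) * poch (-t) j /
        ((Nat.factorial (m - j) : ℝ) * (Nat.factorial j : ℝ))

/-- The two-variable polynomials `f_{mn}` (for `m ≥ n`). -/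
def fmn (κ : ℝ) (m n : ℕ) : MvPolynomial (Fin 2) ℝ :=
  (X 0 * X 1) ^ n *
    ∑ j ∈ Finset.range (m - n + 1),
      C (poch (κ + 1) (m - n - j) * poch κ j /
          ((Nat.factorial (m - n - j) : ℝ) * (Nat.factorial j : ℝ))) *
        X 0 ^ (m - n - j) * X 1 ^ j

/-- The alternating polynomial `a_N = ∏_{i<j} (xᵢ − xⱼ)`. -/
def altPoly (N : ℕ) : MvPolynomial (Fin N) ℝ :=
  ∏ p ∈ Finset.univ.filter (fun p : Fin N × Fin N => p.1 < p.2), (X p.1 - X p.2)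

/-- `A_n(u;κ)`: the coefficient of `v^n` in `(1−(u+v))^{−κ} (1−(u−v))^{−κ}`,
as a formal power series in `u`. -/
def Aser (κ : ℝ) (n : ℕ) : PowerSeries ℝ :=
  PowerSeries.mk fun m =>
    ∑ k ∈ Finset.range (m + n + 1),
      (poch κ k / (Nat.factorial k : ℝ)) *
        (poch κ (m + n - k) / (Nat.factorial (m + n - k) : ℝ)) *
        ∑ a ∈ Finset.range (m + 1),
          (k.choose a : ℝ) * ((m + n - k).choose (m - a) : ℝ) *
            (-1 : ℝ) ^ ((m + n - k) - (m - a))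

/-- `B_n(u;κ)`: the coefficient of `v^n` in `(1−(u+v))^{−κ−1} (1−(u−v))^{−κ}`,
as a formal power series in `u`. -/
def Bser (κ : ℝ) (n : ℕ) : PowerSeries ℝ :=
  PowerSeries.mk fun m =>
    ∑ k ∈ Finset.range (m + n + 1),
      (poch (κ + 1) k / (Nat.factorial k : ℝ)) *
        (poch κ (m + n - k) / (Nat.factorial (m + n - k) : ℝ)) *
        ∑ a ∈ Finset.range (m + 1),
          (k.choose a : ℝ) * ((m + n - k).choose (m - a) : ℝ) *
            (-1 : ℝ) ^ ((m + n - k) - (m - a))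

open Finset

/-- The coefficient of `tʲ` in `(1 - t)^{-a}`. -/
def negBinomCoeff (a : ℝ) (j : ℕ) : ℝ := poch a j / j.factorial

lemma poch_succ_right (a : ℝ) (j : ℕ) : poch a (j + 1) = poch a j * (a + j) := by
  simp [poch, ascPochhammer_succ_eval]

lemma poch_succ_left (a : ℝ) (j : ℕ) : poch a (j + 1) = a * poch (a + 1) j := by
  simp [poch, ascPochhammer_succ_left, Polynomial.eval_comp]

@[simp] lemma negBinomCoeff_zero (a : ℝ) : negBinomCoeff a 0 = 1 := by
  simp [negBinomCoeff, poch]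

lemma succ_mul_negBinomCoeff_succ (a : ℝ) (j : ℕ) :
    (j + 1) * negBinomCoeff a (j + 1) = (a + j) * negBinomCoeff a j := by
  simp only [negBinomCoeff, poch_succ_right, Nat.factorial_succ, Nat.cast_mul]
  field_simp
  push_cast
  ring

lemma add_mul_negBinomCoeff (a : ℝ) (j : ℕ) :
    (a + j) * negBinomCoeff a j = a * negBinomCoeff (a + 1) j := by
  simp only [negBinomCoeff, mul_div_assoc', ← poch_succ_left, poch_succ_right]
  ring

/-- Pascal's rule for the series `(1 - t)⁻¹ (1 - t)^{-a} = (1 - t)^{-(a+1)}`. -/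
lemma negBinomCoeff_add_one_succ (a : ℝ) (k : ℕ) :
    negBinomCoeff (a + 1) (k + 1) = negBinomCoeff (a + 1) k + negBinomCoeff a (k + 1) := by
  have hk : (k : ℝ) + 1 ≠ 0 := by positivity
  apply mul_left_cancel₀ hk
  linear_combination succ_mul_negBinomCoeff_succ (a + 1) k - succ_mul_negBinomCoeff_succ a k
    - add_mul_negBinomCoeff a k

def fmnCoeff (κ : ℝ) (M j : ℕ) : ℝ := negBinomCoeff (κ + 1) (M - j) * negBinomCoeff κ j

lemma fmnCoeff_succ {κ : ℝ} {M j : ℕ} (hj : j < M) :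
    (j + 1) * fmnCoeff κ M (j + 1) = (κ + j) * fmnCoeff κ M j - κ * fmnCoeff κ M (M - j) := by
  obtain ⟨k, rfl⟩ : ∃ k, M = j + k + 1 := ⟨M - j - 1, by omega⟩
  simp only [fmnCoeff, show j + k + 1 - (j + 1) = k by omega, show j + k + 1 - j = k + 1 by omega,
    show j + k + 1 - (k + 1) = j by omega, negBinomCoeff_add_one_succ]
  linear_combination negBinomCoeff (κ + 1) k * succ_mul_negBinomCoeff_succ κ j
    - negBinomCoeff κ (k + 1) * add_mul_negBinomCoeff κ j

lemma fmnCoeff_self (κ : ℝ) (M : ℕ) : (κ + M) * fmnCoeff κ M M = κ * fmnCoeff κ M 0 := by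
  simpa [fmnCoeff] using add_mul_negBinomCoeff κ M

section BinaryForm

variable {R : Type*} [CommRing R]

lemma X_mul_pderiv_X_pow {σ : Type*} (i : σ) (p : ℕ) :
    X i * pderiv i (X i ^ p : MvPolynomial σ R) = (p : MvPolynomial σ R) * X i ^ p := by
  cases p <;> simp; ring

def binaryForm (n M : ℕ) : (ℕ → R) →ₗ[R] MvPolynomial (Fin 2) R where
  toFun c := ∑ j ∈ range (M + 1), C (c j) * X 0 ^ (n + (M - j)) * X 1 ^ (n + j)
  map_add' c d := by simp only [Pi.add_apply, map_add, add_mul, sum_add_distrib]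
  map_smul' r c := by simp only [Pi.smul_apply, smul_eq_mul, map_mul, mul_sum, mul_assoc,
    RingHom.id_apply, smul_eq_C_mul]

lemma binaryForm_apply (n M : ℕ) (c : ℕ → R) : binaryForm n M c =
    ∑ j ∈ range (M + 1), C (c j) * X 0 ^ (n + (M - j)) * X 1 ^ (n + j) := rfl

lemma binaryForm_succ_eq_X_zero_mul (n M : ℕ) (c : ℕ → R) :
    binaryForm n (M + 1) c
      = X 0 * binaryForm n M c + C (c (M + 1)) * X 0 ^ n * X 1 ^ (n + (M + 1)) := by
  rw [binaryForm_apply, sum_range_succ, binaryForm_apply, mul_sum, Nat.sub_self, add_zero]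
  congr 1
  refine sum_congr rfl fun j hj => ?_
  rw [show n + (M + 1 - j) = n + (M - j) + 1 by grind]
  ring

lemma binaryForm_succ_eq_X_one_mul (n M : ℕ) (c : ℕ → R) :
    binaryForm n (M + 1) c
      = C (c 0) * X 0 ^ (n + (M + 1)) * X 1 ^ n + X 1 * binaryForm n M (fun j => c (j + 1)) := by
  rw [binaryForm_apply, sum_range_succ', binaryForm_apply, mul_sum, add_comm]
  congr 1
  refine sum_congr rfl fun j _ => ?_
  rw [show M + 1 - (j + 1) = M - j by omega]
  ring

lemma binaryForm_eq_of_forall_lt {n M : ℕ} {c : ℕ → R} (hc : ∀ j < M, c j = 0) :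
    binaryForm n M c = C (c M) * X 0 ^ n * X 1 ^ (n + M) := by
  rw [binaryForm_apply, sum_range_succ, sum_eq_zero fun j hj => by simp [hc j (mem_range.1 hj)]]
  simp

lemma rename_swap_binaryForm (n M : ℕ) (c : ℕ → R) :
    rename (Equiv.swap 0 1) (binaryForm n M c) = binaryForm n M (fun j => c (M - j)) := by
  rw [binaryForm_apply, binaryForm_apply, map_sum, ← sum_range_reflect]
  refine sum_congr rfl fun j hj => ?_
  have hj : j < M + 1 := mem_range.1 hj
  simp only [map_mul, map_pow, rename_C, rename_X, Equiv.swap_apply_left,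
    Equiv.swap_apply_right, add_tsub_cancel_right, show M - (M - j) = j by omega]
  ring

lemma X_zero_mul_pderiv_binaryForm (n M : ℕ) (c : ℕ → R) :
    X 0 * pderiv 0 (binaryForm n M c)
      = C ((n : R) + M) * binaryForm n M c - binaryForm n M (fun j => j * c j) := by
  simp only [binaryForm_apply, map_sum, mul_sum, ← sum_sub_distrib]
  refine sum_congr rfl fun j hj => ?_
  have hj : j ≤ M := Nat.lt_succ_iff.1 (mem_range.1 hj)
  have h : X 0 * pderiv 0 (X 0 ^ (n + (M - j)) : MvPolynomial (Fin 2) R) = _ :=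
    X_mul_pderiv_X_pow 0 _
  simp only [pderiv_mul, pderiv_C, pderiv_pow (f := (X 1 : MvPolynomial (Fin 2) R)),
    pderiv_X_of_ne one_ne_zero, zero_mul, mul_zero, zero_add, add_zero, map_add, map_mul,
    map_natCast]
  push_cast [Nat.cast_sub hj] at h ⊢
  linear_combination (C (c j) * X 1 ^ (n + j)) * h

lemma X_one_mul_pderiv_binaryForm (n M : ℕ) (c : ℕ → R) :
    X 1 * pderiv 1 (binaryForm n M c)
      = C (n : R) * binaryForm n M c + binaryForm n M (fun j => j * c j) := by
  simp only [binaryForm_apply, map_sum, mul_sum, ← sum_add_distrib]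
  refine sum_congr rfl fun j _ => ?_
  have h : X 1 * pderiv 1 (X 1 ^ (n + j) : MvPolynomial (Fin 2) R) = _ := X_mul_pderiv_X_pow 1 _
  simp only [pderiv_mul, pderiv_C, pderiv_pow (f := (X 0 : MvPolynomial (Fin 2) R)),
    pderiv_X_of_ne zero_ne_one, zero_mul, mul_zero, zero_add, map_mul, map_natCast]
  push_cast at h
  linear_combination (C (c j) * X 0 ^ (n + (M - j))) * h

/-- Coefficient-wise in the monomials `x₀^{n+M-j} x₁^{n+j+1}` this is the recursion for `c`. -/
lemma X_zero_sub_X_one_mul_binaryForm {κ : R} {n M : ℕ} {c : ℕ → R}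
    (hc : ∀ j < M, ((j : R) + 1) * c (j + 1) = (κ + j) * c j - κ * c (M - j))
    (hM : (κ + M) * c M = κ * c 0) :
    (X 0 - X 1) * binaryForm n M (fun j => j * c j)
      = C κ * X 1 * (binaryForm n M c - binaryForm n M (fun j => c (M - j))) := by
  have hshift := (binaryForm_succ_eq_X_zero_mul n M (fun j => j * c j)).symm.trans
    (binaryForm_succ_eq_X_one_mul n M (fun j => j * c j))
  have hrest : binaryForm n M (fun j : ℕ => ((j : R) + 1) * c (j + 1) - j * c j - κ * c j
      + κ * c (M - j)) = C ((M + 1) * c (M + 1)) * X 0 ^ n * X 1 ^ (n + M) := by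
    rw [binaryForm_eq_of_forall_lt fun j hj => by rw [hc j hj]; ring, Nat.sub_self]
    congr 3
    linear_combination -hM
  have hlin : (fun j : ℕ => ((j : R) + 1) * c (j + 1) - j * c j - κ * c j + κ * c (M - j))
      = (fun j => ((j + 1 : ℕ) : R) * c (j + 1)) - (fun j => j * c j) - κ • c
        + κ • fun j => c (M - j) := by
    funext j
    simp only [Pi.add_apply, Pi.sub_apply, Pi.smul_apply, smul_eq_mul]
    push_cast
    ring
  rw [hlin, map_add, map_sub, map_sub, map_smul, map_smul, smul_eq_C_mul, smul_eq_C_mul] at hrest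
  push_cast at hshift hrest
  simp only [zero_mul, map_zero, zero_add] at hshift
  linear_combination hshift + X 1 * hrest

end BinaryForm

lemma fmn_eq_binaryForm (κ : ℝ) (n M : ℕ) :
    fmn κ (n + M) n = binaryForm n M (fmnCoeff κ M) := by
  rw [fmn, binaryForm_apply, Nat.add_sub_cancel_left, mul_sum]
  refine sum_congr rfl fun j _ => ?_
  rw [fmnCoeff, negBinomCoeff, negBinomCoeff, mul_div_mul_comm]
  ring

lemma dunkl_fin_two_eq_algebraMap {κ : ℝ} {i j : Fin 2} (hij : i ≠ j)
    {f p : MvPolynomial (Fin 2) ℝ}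
    (h : (X i - X j) * p = (X i - X j) * pderiv i f + C κ * (f - rename (Equiv.swap i j) f)) :
    dunkl (Fin 2) κ i f =
      algebraMap (MvPolynomial (Fin 2) ℝ) (FractionRing (MvPolynomial (Fin 2) ℝ)) p := by
  have herase : Finset.univ.erase i = {j} := by
    ext k; fin_cases i <;> fin_cases j <;> fin_cases k <;> simp_all
  have hd : algebraMap (MvPolynomial (Fin 2) ℝ) (FractionRing (MvPolynomial (Fin 2) ℝ))
      (X i - X j) ≠ 0 :=
    (map_ne_zero_iff _ (IsFractionRing.injective _ _)).2 (sub_ne_zero.2 (X_injective.ne hij))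
  rw [dunkl, herase, sum_singleton, eq_comm, ← mul_right_inj' hd]
  field_simp
  simp only [← map_mul, ← map_add]
  exact congrArg _ (by linear_combination h)

/-- For `N = 2` and `m ≥ n`:
`D₁(x₁ f_{mn}) = (κ+m+1) f_{mn}` and `D₂(x₂ f_{mn}) − κ·(1,2)f_{mn} = (n+1) f_{mn}`. -/
theorem fmn_eigenfunction (κ : ℝ) (m n : ℕ) (hmn : n ≤ m) :
    dunkl (Fin 2) κ 0 (X 0 * fmn κ m n) =
      algebraMap (MvPolynomial (Fin 2) ℝ) (FractionRing (MvPolynomial (Fin 2) ℝ))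
        ((κ + (m : ℝ) + 1) • fmn κ m n) ∧
    dunkl (Fin 2) κ 1 (X 1 * fmn κ m n) -
        algebraMap (MvPolynomial (Fin 2) ℝ) (FractionRing (MvPolynomial (Fin 2) ℝ))
          (C κ * rename (Equiv.swap (0 : Fin 2) 1) (fmn κ m n)) =
      algebraMap (MvPolynomial (Fin 2) ℝ) (FractionRing (MvPolynomial (Fin 2) ℝ))
        (((n : ℝ) + 1) • fmn κ m n) := by
  obtain ⟨M, rfl⟩ := Nat.exists_eq_add_of_le hmn
  have h0 := X_zero_mul_pderiv_binaryForm n M (fmnCoeff κ M)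
  have h1 := X_one_mul_pderiv_binaryForm n M (fmnCoeff κ M)
  have hkey := X_zero_sub_X_one_mul_binaryForm (n := n) (fun _ hj => fmnCoeff_succ hj)
    (fmnCoeff_self κ M)
  rw [fmn_eq_binaryForm, sub_eq_iff_eq_add, ← map_add]
  constructor
  · apply dunkl_fin_two_eq_algebraMap zero_ne_one
    simp only [pderiv_mul, pderiv_X_self, map_mul, rename_X, Equiv.swap_apply_left,
      rename_swap_binaryForm, smul_eq_C_mul, map_add, map_one, map_natCast, Nat.cast_add] at h0 ⊢
    linear_combination -(X 0 - X 1) * h0 + hkey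
  · apply dunkl_fin_two_eq_algebraMap one_ne_zero
    simp only [pderiv_mul, pderiv_X_self, map_mul, rename_X, Equiv.swap_apply_right,
      Equiv.swap_comm (1 : Fin 2), rename_swap_binaryForm, smul_eq_C_mul, map_add, map_one,
      map_natCast] at h1 ⊢
    linear_combination (X 0 - X 1) * h1 + hkey
end
end

section
/- Let n ∈ ℕ and suppose f = Σ_{i=0}^n c_i p_{n−i,i} with coefficients c_i ∈ ℚ(κ). Then f = 2^{−n} Σ_{i=0}^n q_{n−i,i} · (Σ_{j=0}^n binom(n,j) c_j K_i(j;n)). -/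
open MvPolynomial

noncomputable section

/-!
Setting `u = 1` in the definition of `q` gives `q_{n-i,i} = ∑ₘ V_{im} p_{n-m,m}`, where
`V_{am}` is the coefficient of `x^a` in `(1 - x)^m (1 + x)^(n-m)`, that is
`V_{am} = binom(n,a) K_a(m;n)`. The theorem then reduces to `V² = 2^n`: homogenizing,
`∑ₐ V_{am} A^a B^(n-a) = (B - A)^m (B + A)^(n-m)`, and `A = 1 - x`, `B = 1 + x` turn this into
`2^n x^m`. The weights `binom(n,j)` are absorbed by the self-duality
`binom(n,j) V_{ij} = binom(n,i) V_{ji}`.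
-/

namespace Polynomial

lemma aeval_homogenize_eq_sum {R A : Type*} [CommSemiring R] [CommSemiring A] [Algebra R A]
    (p : R[X]) (n : ℕ) (x : Fin 2 → A) :
    MvPolynomial.aeval x (p.homogenize n) =
      ∑ a ∈ Finset.range (n + 1), p.coeff a • (x 0 ^ a * x 1 ^ (n - a)) := by
  simp [homogenize, Finset.Nat.sum_antidiagonal_eq_sum_range_succ_mk, MvPolynomial.aeval_monomial,
    Finsupp.prod_fintype, Fin.prod_univ_two, Algebra.smul_def]

lemma homogenize_pow {R : Type*} [CommSemiring R] (p : R[X]) {m : ℕ} (hm : p.natDegree ≤ m)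
    (k : ℕ) : (p ^ k).homogenize (k * m) = p.homogenize m ^ k := by
  induction k with
  | zero => simp
  | succ k ih =>
    rw [pow_succ, add_mul, one_mul, homogenize_mul _ _ (natDegree_pow_le_of_le k hm) hm, ih,
      pow_succ]

lemma coeff_one_sub_X_pow {R : Type*} [CommRing R] (j l : ℕ) :
    ((1 - X : R[X]) ^ j).coeff l = (-1) ^ l * j.choose l := by
  have h : (1 - X : R[X]) ^ j = ((1 + X) ^ j).comp (C (-1) * X) := by simp [sub_eq_add_neg]
  rw [h, comp_C_mul_X_coeff, coeff_one_add_X_pow, mul_comm]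

lemma coeff_X_add_one_pow_mul_X_sub_one_pow {R : Type*} [CommRing R] (k m d : ℕ) :
    ((X + 1 : R[X]) ^ k * (X - 1) ^ m).coeff d =
      ∑ a ∈ Finset.range (d + 1),
        (k.choose a : R) * m.choose (d - a) * (-1) ^ (m - (d - a)) := by
  rw [coeff_mul, Finset.Nat.sum_antidiagonal_eq_sum_range_succ_mk]
  refine Finset.sum_congr rfl fun a _ => ?_
  rw [coeff_X_add_one_pow, sub_eq_add_neg, ← C_1, ← C_neg, coeff_X_add_C_pow]
  ring

def krawGen (n i : ℕ) : ℝ[X] := (1 - X) ^ i * (1 + X) ^ (n - i)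

/-- `krawCoeff n a i = binom(n,a) K_a(i;n)` (see `choose_mul_kraw`). -/
def krawCoeff (n a i : ℕ) : ℝ := (krawGen n i).coeff a

lemma homogenize_krawGen {n i : ℕ} (hi : i ≤ n) :
    (krawGen n i).homogenize n =
      (MvPolynomial.X 1 - MvPolynomial.X 0) ^ i *
        (MvPolynomial.X 1 + MvPolynomial.X 0) ^ (n - i) := by
  have h₁ : (1 - X : ℝ[X]).natDegree ≤ 1 := by compute_degree
  have h₂ : (1 + X : ℝ[X]).natDegree ≤ 1 := by compute_degree
  have hmul :=
    homogenize_mul _ _ (natDegree_pow_le_of_le i h₁) (natDegree_pow_le_of_le (n - i) h₂)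
  rw [show i * 1 + (n - i) * 1 = n by omega] at hmul
  rw [krawGen, hmul, homogenize_pow _ h₁, homogenize_pow _ h₂]
  simp [homogenize_X one_ne_zero]

lemma sum_krawCoeff_smul {n i : ℕ} (hi : i ≤ n) {S : Type*} [CommRing S] [Algebra ℝ S]
    (A B : S) :
    ∑ a ∈ Finset.range (n + 1), krawCoeff n a i • (A ^ a * B ^ (n - a)) =
      (B - A) ^ i * (B + A) ^ (n - i) := by
  have h := aeval_homogenize_eq_sum (krawGen n i) n ![A, B]
  rw [homogenize_krawGen hi] at h
  simpa [krawCoeff] using h.symm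

lemma sum_krawCoeff_mul_krawCoeff {n m : ℕ} (hm : m ≤ n) (j : ℕ) :
    ∑ a ∈ Finset.range (n + 1), krawCoeff n j a * krawCoeff n a m =
      if j = m then 2 ^ n else 0 := by
  have hrhs :
      ((1 + X) - (1 - X) : ℝ[X]) ^ m * ((1 + X) + (1 - X)) ^ (n - m) = C (2 ^ n) * X ^ m := by
    rw [show (2 : ℝ) ^ n = 2 ^ m * 2 ^ (n - m) by rw [← pow_add, Nat.add_sub_cancel' hm]]
    simp only [map_mul, map_pow, map_ofNat]
    ring
  have h := congrArg (coeff · j) ((sum_krawCoeff_smul hm (1 - X : ℝ[X]) (1 + X)).trans hrhs)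
  simp only [finsetSum_coeff, coeff_smul, coeff_C_mul_X_pow] at h
  simpa [krawCoeff, krawGen, mul_comm, eq_comm] using h

lemma krawCoeff_eq_coeff_X_add_one_pow_mul_X_sub_one_pow {n i m : ℕ} (hi : i ≤ n)
    (hm : m ≤ n) :
    krawCoeff n i m = ((X + 1 : ℝ[X]) ^ (n - m) * (X - 1) ^ m).coeff (n - i) := by
  rw [mul_comm, ← sum_krawCoeff_smul hm (1 : ℝ[X]) X, finsetSum_coeff,
    Finset.sum_eq_single_of_mem i (Finset.mem_range_succ_iff.mpr hi)]
  · simp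
  · intro a ha hai
    rw [Finset.mem_range_succ_iff] at ha
    simp [coeff_X_pow, show n - i ≠ n - a by omega]

lemma krawCoeff_eq_sum (n i j : ℕ) :
    krawCoeff n i j =
      ∑ l ∈ Finset.range (i + 1), (-1 : ℝ) ^ l * j.choose l * (n - j).choose (i - l) := by
  rw [krawCoeff, krawGen, coeff_mul, Finset.Nat.sum_antidiagonal_eq_sum_range_succ_mk]
  simp only [coeff_one_sub_X_pow, coeff_one_add_X_pow]

/-- Both sides are read off `((1 + X) + y (1 - X))^n = ((1 + y) + (1 - y) X)^n`. -/
lemma sum_choose_mul_krawCoeff_mul_pow {n i : ℕ} (hi : i ≤ n) (y : ℝ) :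
    ∑ j ∈ Finset.range (n + 1), n.choose j * krawCoeff n i j * y ^ j =
      n.choose i * (krawGen n i).eval y := by
  have hgen : ∑ j ∈ Finset.range (n + 1), C (n.choose j * y ^ j) * krawGen n j =
      ∑ a ∈ Finset.range (n + 1), C (n.choose a * (krawGen n a).eval y) * X ^ a :=
    calc _ = (C y * (1 - X) + (1 + X)) ^ n := by
          rw [add_pow]
          refine Finset.sum_congr rfl fun j _ => ?_
          simp only [krawGen, mul_pow, map_mul, map_pow, map_natCast]
          ring
      _ = (X * C (1 - y) + C (1 + y)) ^ n := by
          congr 1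
          simp only [map_sub, map_add, map_one]
          ring
      _ = _ := by
          rw [add_pow]
          refine Finset.sum_congr rfl fun a _ => ?_
          simp only [krawGen, eval_mul, eval_pow, eval_sub, eval_add, eval_one, eval_X, map_mul,
            map_pow, map_natCast]
          ring
  have h := congrArg (coeff · i) hgen
  simp only [finsetSum_coeff, coeff_C_mul, coeff_X_pow, mul_ite, mul_one, mul_zero,
    Finset.sum_ite_eq, Finset.mem_range, Nat.lt_succ_of_le hi, if_true] at h
  rw [← h]
  exact Finset.sum_congr rfl fun j _ => by rw [krawCoeff]; ring

lemma choose_mul_krawCoeff_comm {n i j : ℕ} (hi : i ≤ n) (hj : j ≤ n) :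
    n.choose j * krawCoeff n i j = n.choose i * krawCoeff n j i := by
  have hpoly : ∑ k ∈ Finset.range (n + 1), C (n.choose k * krawCoeff n i k) * X ^ k =
      C (n.choose i : ℝ) * krawGen n i := funext fun y => by
    simpa [eval_finsetSum, mul_assoc] using sum_choose_mul_krawCoeff_mul_pow hi y
  have h := congrArg (coeff · j) hpoly
  simp only [finsetSum_coeff, coeff_C_mul, coeff_X_pow, mul_ite, mul_one, mul_zero,
    Finset.sum_ite_eq, Finset.mem_range, Nat.lt_succ_of_le hj, if_true] at h
  simpa only [krawCoeff] using h

end Polynomial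

open Polynomial

lemma poch_neg_natCast (m c : ℕ) : poch (-m) c = (-1) ^ c * c.factorial * m.choose c := by
  rw [poch, ascPochhammer_eval_neg_eq_descPochhammer, descPochhammer_eval_eq_descFactorial,
    Nat.descFactorial_eq_factorial_mul_choose]
  push_cast
  ring

lemma choose_mul_kraw {n i j : ℕ} (hi : i ≤ n) (hj : j ≤ n) :
    n.choose i * kraw n i j = krawCoeff n i j := by
  have hchoose : (n.choose i : ℝ) ≠ 0 := by exact_mod_cast (Nat.choose_pos hi).ne'
  rw [kraw, ← mul_assoc, mul_inv_cancel₀ hchoose, one_mul, krawCoeff_eq_sum]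
  refine Finset.sum_congr rfl fun l _ => ?_
  rw [show (j : ℝ) - n = -((n - j : ℕ) : ℝ) by push_cast [hj]; ring, poch_neg_natCast,
    poch_neg_natCast]
  have hsq : ((-1 : ℝ) ^ (i - l)) ^ 2 = 1 := by
    rw [← pow_mul, mul_comm, pow_mul, neg_one_sq, one_pow]
  field_simp
  linear_combination ((n - j).choose (i - l) * j.choose l : ℝ) * hsq

lemma choose_mul_kraw_eq_krawCoeff {n i j : ℕ} (hi : i ≤ n) (hj : j ≤ n) :
    n.choose j * kraw n i j = krawCoeff n j i := by
  have hchoose : (n.choose i : ℝ) ≠ 0 := by exact_mod_cast (Nat.choose_pos hi).ne'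
  apply mul_left_cancel₀ hchoose
  rw [mul_left_comm, choose_mul_kraw hi hj, choose_mul_krawCoeff_comm hi hj]

lemma sum_kraw_transform_mul_krawCoeff {n m : ℕ} (hm : m ≤ n) (c : ℕ → ℝ) :
    ∑ i ∈ Finset.range (n + 1),
        (∑ j ∈ Finset.range (n + 1), n.choose j * c j * kraw n i j) * krawCoeff n i m =
      2 ^ n * c m := by
  calc _ = ∑ j ∈ Finset.range (n + 1), c j *
        ∑ i ∈ Finset.range (n + 1), krawCoeff n j i * krawCoeff n i m := by
        simp only [Finset.sum_mul, Finset.mul_sum]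
        rw [Finset.sum_comm]
        refine Finset.sum_congr rfl fun j hj => Finset.sum_congr rfl fun i hi => ?_
        rw [← choose_mul_kraw_eq_krawCoeff (Finset.mem_range_succ_iff.mp hi)
            (Finset.mem_range_succ_iff.mp hj)]
        ring
    _ = 2 ^ n * c m := by
        simp only [sum_krawCoeff_mul_krawCoeff hm, mul_ite, mul_zero, Finset.sum_ite_eq',
          Finset.mem_range, Nat.lt_succ_of_le hm, if_true, mul_comm]

lemma sum_smul_eq_kraw_transform {M : Type*} [AddCommGroup M] [Module ℝ M] (n : ℕ)
    (c : ℕ → ℝ) (g : ℕ → M) :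
    ∑ i ∈ Finset.range (n + 1), c i • g i =
      ((2 : ℝ) ^ n)⁻¹ • ∑ i ∈ Finset.range (n + 1),
        (∑ j ∈ Finset.range (n + 1), n.choose j * c j * kraw n i j) •
          ∑ m ∈ Finset.range (n + 1), krawCoeff n i m • g m := by
  symm
  calc _ = ((2 : ℝ) ^ n)⁻¹ • ∑ m ∈ Finset.range (n + 1),
        (∑ i ∈ Finset.range (n + 1),
            (∑ j ∈ Finset.range (n + 1), n.choose j * c j * kraw n i j) * krawCoeff n i m) •
          g m := by
        simp only [Finset.smul_sum, smul_smul, Finset.sum_smul]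
        exact Finset.sum_comm
    _ = _ := by
        rw [Finset.smul_sum]
        refine Finset.sum_congr rfl fun m hm => ?_
        rw [sum_kraw_transform_mul_krawCoeff (Finset.mem_range_succ_iff.mp hm), smul_smul,
          inv_mul_cancel_left₀ (by positivity)]

lemma qpoly_eq_sum_krawCoeff_smul (σ : Type) [Fintype σ] [DecidableEq σ] (x1 x2 : σ) (κ : ℝ)
    {n i : ℕ} (hi : i ≤ n) :
    qpoly σ x1 x2 κ (n - i) i =
      ∑ m ∈ Finset.range (n + 1), krawCoeff n i m • ppoly σ x1 x2 κ (n - m) m := by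
  rw [qpoly, Nat.sub_add_cancel hi, ← Finset.sum_range_reflect]
  refine Finset.sum_congr rfl fun m hm => ?_
  rw [Finset.mem_range_succ_iff] at hm
  rw [Nat.add_sub_cancel, Nat.sub_sub_self hm,
    krawCoeff_eq_coeff_X_add_one_pow_mul_X_sub_one_pow hi hm, coeff_X_add_one_pow_mul_X_sub_one_pow]

/-- If `f = ∑_{i=0}^n cᵢ p_{n−i,i}` then
`f = 2^{−n} ∑_{i=0}^n q_{n−i,i} · (∑_{j=0}^n binom(n,j) cⱼ Kᵢ(j;n))`. -/
theorem p_to_q_expansion (N : ℕ) (hN : 2 ≤ N) (κ : ℝ) (n : ℕ) (c : ℕ → ℝ) :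
    ∑ i ∈ Finset.range (n + 1),
        c i • ppoly (Fin N) ⟨0, by omega⟩ ⟨1, by omega⟩ κ (n - i) i =
      ((2 : ℝ) ^ n)⁻¹ •
        ∑ i ∈ Finset.range (n + 1),
          (∑ j ∈ Finset.range (n + 1), (n.choose j : ℝ) * c j * kraw n i (j : ℝ)) •
            qpoly (Fin N) ⟨0, by omega⟩ ⟨1, by omega⟩ κ (n - i) i := by
  rw [sum_smul_eq_kraw_transform n c]
  refine congrArg _ (Finset.sum_congr rfl fun i hi => ?_)
  rw [qpoly_eq_sum_krawCoeff_smul _ _ _ κ (Finset.mem_range_succ_iff.mp hi)]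
end
end

section
/- Suppose n is even, 1 ≤ i ≤ n/2, and κ = −(n−2i+1)/2. Then there exist rational numbers c_0,…,c_{n−2i} such that ω_{n−i,i} = Σ_{j=0}^{n−2i} c_j q_{n−j,j} (all polynomials taken with κ specialized to −(n−2i+1)/2). Explicitly, ω_{n−i,i} = Σ_{j=0}^n [(i−j+1)_{n−2i}/(n−2i)!] p_{n−j,j} and the coefficient of q_{n−l,l} in its q-expansion vanishes for l > n−2i. -/
open MvPolynomial

noncomputable section

/-!
Put `d = n - 2i`, so that `κ = -(d+1)/2`. Then `-κ = κ + d + 1`, the two Pochhammer symbols in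
the coefficients of `ω_{i+d,i}` cancel, and the coefficients of `p_{i+d+j,i-j}` and `p_{i-j,i+d+j}`
become `C(d+j,d)` and `C(d+j-1,d)`. These are the values of the degree-`d` polynomial
`j ↦ (i-j+1)_d/d!` at `i-j` and `i+d+j` (the sign `(-1)^d` disappears since `d` is even), and it
vanishes in between: this is the `p`-expansion.

The `q`'s are obtained from the `p`'s through the matrix
`K(a,i) = [u^a v^(n-a)] (u+v)^i (u-v)^(n-i)`, and `K² = 2^n` (substitute `u ↦ u+v`, `v ↦ u-v`), so
the `q`-coefficients are `2^(-n) ∑_b c_b K(b,a)`. The factor `(u-v)^(n-a)` makes this sum an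
`(n-a)`-th finite difference of the degree-`d` polynomial `b ↦ c_b`, which vanishes once `n - a > d`.
-/

open Finset Nat
open scoped Polynomial

lemma poch_natCast_add_one_div_factorial (m k : ℕ) :
    poch ((m : ℝ) + 1) k / k ! = ((m + k).choose k : ℝ) := by
  have h : poch ((m : ℝ) + 1) k = ((m + 1).ascFactorial k : ℝ) := by
    rw [poch, ← ascPochhammer_nat_eq_ascFactorial, ascPochhammer_eval_cast]; push_cast; rfl
  rw [h, ascFactorial_eq_factorial_mul_choose]
  push_cast
  field_simp

lemma poch_neg_natCast_div_factorial {d : ℕ} (hd : Even d) (m : ℕ) :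
    poch (-((m + d : ℕ) : ℝ)) d / d ! = ((m + d).choose d : ℝ) := by
  rw [poch, ascPochhammer_eval_neg_eq_descPochhammer, hd.neg_one_pow, one_mul,
    descPochhammer_eval_eq_descFactorial, descFactorial_eq_factorial_mul_choose]
  push_cast
  field_simp

lemma ratCast_ascPochhammer_eval (x : ℚ) (k : ℕ) :
    (((ascPochhammer ℚ k).eval x : ℚ) : ℝ) = poch (x : ℝ) k := by
  rw [poch, ← ascPochhammer_map (algebraMap ℚ ℝ), Polynomial.eval_map_algebraMap,
    ← eq_ratCast (algebraMap ℚ ℝ)]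
  exact (Polynomial.aeval_algebraMap_apply_eq_algebraMap_eval x _).symm

lemma sum_poch_div_factorial_smul_eq {M : Type*} [AddCommMonoid M] [Module ℝ M] {d : ℕ}
    (hd : Even d) (i : ℕ) (F : ℕ → ℕ → M) :
    ∑ j ∈ range (2 * i + d + 1), (poch ((i : ℝ) - j + 1) d / d !) • F (2 * i + d - j) j =
      F (i + d) i + ∑ k ∈ range i,
        (((k + 1 + d).choose d : ℝ) • F (i + d + (k + 1)) (i - (k + 1)) +
          ((k + d).choose d : ℝ) • F (i - (k + 1)) (i + d + (k + 1))) := by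
  rw [show 2 * i + d + 1 = i + 1 + d + i by omega, sum_range_add, sum_range_add, sum_range_succ,
    ← sum_range_reflect, sum_add_distrib]
  have hlow : ∀ k ∈ range i, (poch ((i : ℝ) - ↑(i - 1 - k) + 1) d / d !) •
      F (2 * i + d - (i - 1 - k)) (i - 1 - k) =
        ((k + 1 + d).choose d : ℝ) • F (i + d + (k + 1)) (i - (k + 1)) := by
    intro k hk
    have hk := mem_range.mp hk
    rw [show (i : ℝ) - ↑(i - 1 - k) + 1 = ((k + 1 : ℕ) : ℝ) + 1 by
      rw [Nat.cast_sub (by omega), Nat.cast_sub (by omega)]; push_cast; ring,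
      poch_natCast_add_one_div_factorial, show 2 * i + d - (i - 1 - k) = i + d + (k + 1) by omega,
      show i - 1 - k = i - (k + 1) by omega]
  have hmid : ∀ k ∈ range d, (poch ((i : ℝ) - ↑(i + 1 + k) + 1) d / d !) •
      F (2 * i + d - (i + 1 + k)) (i + 1 + k) = 0 := by
    intro k hk
    rw [show (i : ℝ) - ↑(i + 1 + k) + 1 = -(k : ℝ) by push_cast; ring,
      poch, ascPochhammer_eval_neg_coe_nat_of_lt (mem_range.mp hk), zero_div, zero_smul]
  have htop : ∀ k ∈ range i, (poch ((i : ℝ) - ↑(i + 1 + d + k) + 1) d / d !) •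
      F (2 * i + d - (i + 1 + d + k)) (i + 1 + d + k) =
        ((k + d).choose d : ℝ) • F (i - (k + 1)) (i + d + (k + 1)) := by
    intro k hk
    rw [show (i : ℝ) - ↑(i + 1 + d + k) + 1 = -((k + d : ℕ) : ℝ) by push_cast; ring,
      poch_neg_natCast_div_factorial hd, show 2 * i + d - (i + 1 + d + k) = i - (k + 1) by omega,
      show i + 1 + d + k = i + d + (k + 1) by omega]
  have hcentre : (poch ((i : ℝ) - i + 1) d / d !) • F (2 * i + d - i) i = F (i + d) i := by
    rw [show (i : ℝ) - i + 1 = ((0 : ℕ) : ℝ) + 1 by push_cast; ring,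
      poch_natCast_add_one_div_factorial, zero_add, choose_self, Nat.cast_one, one_smul,
      show 2 * i + d - i = i + d by omega]
  rw [sum_congr rfl hlow, sum_congr rfl hmid, sum_congr rfl htop, hcentre, sum_const_zero,
    add_zero]
  abel

lemma poch_div_factorial_succ_mul_add (d k : ℕ) :
    poch ((d : ℝ) + 1) k / (k + 1)! * ((d : ℝ) + (k + 1)) = ((k + 1 + d).choose d : ℝ) := by
  have h := poch_natCast_add_one_div_factorial d (k + 1)
  rw [poch, ascPochhammer_succ_eval, ← poch] at h
  rw [show k + 1 + d = d + (k + 1) by ring, choose_symm_add, ← h]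
  ring

lemma poch_div_factorial_succ_mul_succ (d k : ℕ) :
    poch ((d : ℝ) + 1) k / (k + 1)! * ((k : ℝ) + 1) = ((k + d).choose d : ℝ) := by
  rw [add_comm k d, choose_symm_add, ← poch_natCast_add_one_div_factorial, factorial_succ]
  push_cast
  field_simp

lemma omegaP_eq_sum_poch_smul_ppoly (σ : Type) [Fintype σ] [DecidableEq σ] (x1 x2 : σ)
    {n i : ℕ} (hn : Even n) (hi : 2 * i ≤ n) :
    omegaP σ x1 x2 (-((n : ℝ) - 2 * i + 1) / 2) (n - i) i =
      ∑ j ∈ range (n + 1), (poch ((i : ℝ) - j + 1) (n - 2 * i) / (n - 2 * i)!) •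
        ppoly σ x1 x2 (-((n : ℝ) - 2 * i + 1) / 2) (n - j) j := by
  obtain ⟨d, rfl⟩ : ∃ d, n = 2 * i + d := ⟨n - 2 * i, by omega⟩
  have hd : Even d := (Nat.even_add.mp hn).mp (even_two_mul i)
  have hκ : -(((2 * i + d : ℕ) : ℝ) - 2 * i + 1) / 2 = -(((d : ℝ) + 1) / 2) := by
    push_cast; ring
  rw [omegaP, if_pos (by omega), omegaAux, show 2 * i + d - 2 * i = d by omega,
    show 2 * i + d - i = i + d by omega, sum_poch_div_factorial_smul_eq hd i, hκ]
  congr 1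
  rw [← Ico_add_one_right_eq_Icc, sum_Ico_eq_sum_range, add_tsub_cancel_right]
  refine sum_congr rfl fun k _ => ?_
  have hpos : poch (((d : ℝ) + 1) / 2) (k + 1) ≠ 0 :=
    (ascPochhammer_pos _ _ (by positivity)).ne'
  rw [show ((i + d : ℕ) : ℝ) = i + d from Nat.cast_add i d, add_comm 1 k, Nat.cast_add_one,
    add_tsub_cancel_right, neg_neg, show -(((d : ℝ) + 1) / 2) + (i + d) - i + 1 = ((d : ℝ) + 1) / 2
      by ring, show (i : ℝ) + d - i + 1 = d + 1 by ring, mul_div_mul_left _ _ hpos,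
    show (i : ℝ) + d - i + (k + 1) = d + (k + 1) by ring, smul_add, smul_smul, smul_smul,
    poch_div_factorial_succ_mul_add, poch_div_factorial_succ_mul_succ]

lemma Polynomial.coeff_X_sub_one_pow {R : Type*} [Ring R] (m k : ℕ) :
    ((X - 1 : R[X]) ^ m).coeff k = (-1) ^ (m - k) * m.choose k := by
  rw [sub_eq_add_neg, ← map_one C, ← map_neg, coeff_X_add_C_pow]

lemma Polynomial.homogenize_eq_sum_range {R : Type*} [CommSemiring R] {p : R[X]} {n : ℕ}
    (hp : p.natDegree ≤ n) :
    p.homogenize n = ∑ a ∈ range (n + 1),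
      MvPolynomial.C (p.coeff a) * MvPolynomial.X 0 ^ a * MvPolynomial.X 1 ^ (n - a) := by
  conv_lhs => rw [p.as_sum_range_C_mul_X_pow' (Nat.lt_succ_of_le hp)]
  simp only [homogenize_finsetSum, homogenize_C_mul]
  refine sum_congr rfl fun a ha => ?_
  rw [homogenize_X_pow (Nat.lt_succ_iff.mp (mem_range.mp ha)), mul_assoc]

lemma Polynomial.homogenize_X_add_one_pow_mul_X_sub_one_pow {R : Type*} [CommRing R] {i n : ℕ}
    (hi : i ≤ n) :
    ((X + 1 : R[X]) ^ i * (X - 1) ^ (n - i)).homogenize n =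
      (MvPolynomial.X 0 + MvPolynomial.X 1) ^ i *
        (MvPolynomial.X 0 - MvPolynomial.X 1) ^ (n - i) := by
  apply homogenize_eq_of_isHomogeneous
  · have h := (((isHomogeneous_X R (0 : Fin 2)).add (isHomogeneous_X R 1)).pow i).mul
      (((isHomogeneous_X R (0 : Fin 2)).sub (isHomogeneous_X R 1)).pow (n - i))
    rwa [one_mul, one_mul, Nat.add_sub_of_le hi] at h
  · simp

/-- The coefficient of `u^a v^(n-a)` in `(u+v)^i (u-v)^(n-i)`, so that
`q_{a,n-a} = ∑ i, krawMat n a i • p_{i,n-i}`. -/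
def krawMat (n a i : ℕ) : ℚ :=
  ((Polynomial.X + 1 : ℚ[X]) ^ i * (Polynomial.X - 1) ^ (n - i)).coeff a

lemma krawMat_eq_sum (n a i : ℕ) :
    krawMat n a i = ∑ t ∈ range (a + 1),
      (i.choose t : ℚ) * ((n - i).choose (a - t) : ℚ) * (-1) ^ ((n - i) - (a - t)) := by
  rw [krawMat, Polynomial.coeff_mul, Nat.sum_antidiagonal_eq_sum_range_succ_mk]
  refine sum_congr rfl fun t _ => ?_
  rw [Polynomial.coeff_X_add_one_pow, Polynomial.coeff_X_sub_one_pow]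
  ring

lemma sum_C_krawMat_mul (n : ℕ) {i : ℕ} (hi : i ≤ n) :
    ∑ a ∈ range (n + 1), Polynomial.C (krawMat n a i) *
      ((Polynomial.X + 1) ^ a * (Polynomial.X - 1) ^ (n - a)) =
        Polynomial.C (2 ^ n) * Polynomial.X ^ i := by
  have hdeg : ((Polynomial.X + 1 : ℚ[X]) ^ i * (Polynomial.X - 1) ^ (n - i)).natDegree ≤ n := by
    compute_degree
    omega
  have h := congrArg (MvPolynomial.aeval ![(Polynomial.X + 1 : ℚ[X]), Polynomial.X - 1])
    (Polynomial.homogenize_X_add_one_pow_mul_X_sub_one_pow (R := ℚ) hi)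
  rw [Polynomial.homogenize_eq_sum_range hdeg] at h
  simp only [map_sum, map_mul, map_pow, map_add, map_sub, algHom_C, Polynomial.algebraMap_eq,
    aeval_X, Matrix.cons_val_zero, Matrix.cons_val_one, add_add_sub_cancel, add_sub_sub_cancel] at h
  simp only [krawMat, ← mul_assoc, h, map_pow, map_ofNat]
  rw [← Nat.add_sub_of_le hi, pow_add, Nat.add_sub_cancel_left]
  ring

lemma sum_krawMat_mul_krawMat (n b : ℕ) {i : ℕ} (hi : i ≤ n) :
    ∑ a ∈ range (n + 1), krawMat n b a * krawMat n a i = if b = i then 2 ^ n else 0 := by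
  have h := congrArg (Polynomial.coeff · b) (sum_C_krawMat_mul n hi)
  simp only [Polynomial.finsetSum_coeff, Polynomial.coeff_C_mul, Polynomial.coeff_X_pow, mul_ite,
    mul_one, mul_zero] at h
  rw [← h]
  exact sum_congr rfl fun a _ => mul_comm _ _

lemma sum_eval_mul_coeff_X_sub_one_pow_eq_zero {R : Type*} [CommRing R] {Q : R[X]} {m : ℕ}
    (hQ : Q.natDegree < m) (y : R) :
    ∑ s ∈ range (m + 1), Q.eval (y + s) * ((Polynomial.X - 1 : R[X]) ^ m).coeff s = 0 := by
  have h := fwdDiff_iter_eq_sum_shift (1 : R) Q.eval m y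
  rw [Polynomial.fwdDiff_iter_eq_zero_of_degree_lt hQ, Pi.zero_apply] at h
  rw [h]
  refine sum_congr rfl fun s _ => ?_
  rw [Polynomial.coeff_X_sub_one_pow, zsmul_eq_mul, nsmul_eq_mul, mul_one]
  push_cast
  ring

lemma sum_eval_mul_coeff_X_pow_mul_eq_zero {R : Type*} [CommRing R] {Q : R[X]} {m t n : ℕ}
    (hQ : Q.natDegree < m) (h : t + m ≤ n) (y : R) :
    ∑ b ∈ range (n + 1),
      Q.eval (y + b) * (Polynomial.X ^ t * (Polynomial.X - 1 : R[X]) ^ m).coeff b = 0 := by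
  rw [show n + 1 = t + (m + 1 + (n - t - m)) by omega, sum_range_add, sum_range_add]
  simp only [Polynomial.coeff_X_pow_mul', Nat.le_add_right, if_true, add_tsub_cancel_left]
  rw [sum_eq_zero (s := range t) fun b hb => by rw [if_neg (by simpa using hb), mul_zero],
    sum_eq_zero (s := range (n - t - m)) fun s _ => by
      rw [Polynomial.coeff_X_sub_one_pow, choose_eq_zero_of_lt (by omega), Nat.cast_zero,
        mul_zero, mul_zero], zero_add, add_zero]
  simpa [add_assoc] using sum_eval_mul_coeff_X_sub_one_pow_eq_zero hQ (y + t)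

lemma sum_eval_mul_krawMat_eq_zero {Q : ℚ[X]} {n a : ℕ} (hQ : Q.natDegree < n - a) (y : ℚ) :
    ∑ b ∈ range (n + 1), Q.eval (y + b) * krawMat n b a = 0 := by
  have hexp : (Polynomial.X + 1 : ℚ[X]) ^ a * (Polynomial.X - 1) ^ (n - a) =
      ∑ t ∈ range (a + 1), Polynomial.C (a.choose t : ℚ) *
        (Polynomial.X ^ t * (Polynomial.X - 1) ^ (n - a)) := by
    rw [add_pow, sum_mul]
    refine sum_congr rfl fun t _ => ?_
    rw [one_pow, mul_one, ← map_natCast Polynomial.C]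
    ring
  simp only [krawMat, hexp, Polynomial.finsetSum_coeff, Polynomial.coeff_C_mul, mul_sum]
  rw [sum_comm]
  refine sum_eq_zero fun t ht => ?_
  simp only [mul_left_comm _ (a.choose t : ℚ), ← mul_sum]
  rw [sum_eval_mul_coeff_X_pow_mul_eq_zero hQ (by have := mem_range.mp ht; omega), mul_zero]

/-- Since `krawMat n` squares to `2^n`, these are the coordinates of `∑ e i • p_{i,n-i}` in the
basis `q_{a,n-a}`. -/
def krawInv (n : ℕ) (e : ℕ → ℚ) (a : ℕ) : ℚ :=
  (∑ b ∈ range (n + 1), e b * krawMat n b a) / 2 ^ n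

lemma krawInv_eq_zero {n a : ℕ} {e : ℕ → ℚ} (Q : ℚ[X]) (y : ℚ)
    (he : ∀ b ≤ n, e b = Q.eval (y + b)) (hQ : Q.natDegree < n - a) : krawInv n e a = 0 := by
  rw [krawInv, sum_congr rfl fun b hb => by rw [he b (mem_range_succ_iff.mp hb)],
    sum_eval_mul_krawMat_eq_zero hQ, zero_div]

lemma sum_krawInv_mul_krawMat (n : ℕ) (e : ℕ → ℚ) {i : ℕ} (hi : i ≤ n) :
    ∑ a ∈ range (n + 1), krawInv n e a * krawMat n a i = e i := by
  simp only [krawInv, div_mul_eq_mul_div, ← sum_div, sum_mul, mul_assoc]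
  rw [sum_comm]
  simp only [← mul_sum, sum_krawMat_mul_krawMat n _ hi, mul_ite, mul_zero, sum_ite_eq',
    mem_range, Nat.lt_succ_of_le hi, if_true]
  field_simp

lemma sum_krawInv_smul_sum_krawMat_smul {𝕜 M : Type*} [Field 𝕜] [CharZero 𝕜] [AddCommMonoid M]
    [Module 𝕜 M] (n : ℕ) (e : ℕ → ℚ) (P : ℕ → M) :
    ∑ a ∈ range (n + 1), (krawInv n e a : 𝕜) • ∑ i ∈ range (n + 1), (krawMat n a i : 𝕜) • P i =
      ∑ i ∈ range (n + 1), (e i : 𝕜) • P i := by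
  simp only [smul_sum, smul_smul]
  rw [sum_comm]
  refine sum_congr rfl fun i hi => ?_
  rw [← sum_smul, ← sum_krawInv_mul_krawMat n e (mem_range_succ_iff.mp hi)]
  push_cast
  rfl

lemma qpoly_sub_eq_sum_krawMat_smul (σ : Type) [Fintype σ] [DecidableEq σ] (x1 x2 : σ) (κ : ℝ)
    {n j : ℕ} (hj : j ≤ n) :
    qpoly σ x1 x2 κ (n - j) j =
      ∑ i ∈ range (n + 1), (krawMat n (n - j) i : ℝ) • ppoly σ x1 x2 κ i (n - i) := by
  rw [qpoly, Nat.sub_add_cancel hj]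
  refine sum_congr rfl fun i _ => ?_
  rw [krawMat_eq_sum]
  push_cast
  rfl

lemma sum_smul_ppoly_eq_sum_krawInv_smul_qpoly (σ : Type) [Fintype σ] [DecidableEq σ]
    (x1 x2 : σ) (κ : ℝ) (n : ℕ) (e : ℕ → ℚ) :
    ∑ j ∈ range (n + 1), (e j : ℝ) • ppoly σ x1 x2 κ (n - j) j =
      ∑ j ∈ range (n + 1),
        (krawInv n (fun i => e (n - i)) (n - j) : ℝ) • qpoly σ x1 x2 κ (n - j) j := by
  calc ∑ j ∈ range (n + 1), (e j : ℝ) • ppoly σ x1 x2 κ (n - j) j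
      = ∑ i ∈ range (n + 1), (e (n - i) : ℝ) • ppoly σ x1 x2 κ i (n - i) := by
        rw [← sum_range_reflect]
        refine sum_congr rfl fun i hi => ?_
        rw [add_tsub_cancel_right, Nat.sub_sub_self (mem_range_succ_iff.mp hi)]
    _ = ∑ a ∈ range (n + 1), (krawInv n (fun i => e (n - i)) a : ℝ) •
          ∑ i ∈ range (n + 1), (krawMat n a i : ℝ) • ppoly σ x1 x2 κ i (n - i) :=
        (sum_krawInv_smul_sum_krawMat_smul n _ _).symm
    _ = _ := by
        rw [← sum_range_reflect]
        refine sum_congr rfl fun j hj => ?_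
        rw [add_tsub_cancel_right,
          qpoly_sub_eq_sum_krawMat_smul σ x1 x2 κ (mem_range_succ_iff.mp hj)]

/-- Let `n` be even, `1 ≤ i ≤ n/2`, `κ = −(n−2i+1)/2`.  Then
`ω_{n−i,i} = ∑_{j=0}^n [(i−j+1)_{n−2i}/(n−2i)!] p_{n−j,j}`, and
`ω_{n−i,i} = ∑_{j=0}^{n−2i} cⱼ q_{n−j,j}` with rational coefficients `cⱼ`
(i.e. the coefficients of `q_{n−l,l}` vanish for `l > n−2i`). -/
theorem omega_q_expansion_even (N : ℕ) (hN : 2 ≤ N) (n i : ℕ) (hne : Even n)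
    (hi1 : 1 ≤ i) (hi2 : 2 * i ≤ n) :
    omegaP (Fin N) ⟨0, by omega⟩ ⟨1, by omega⟩ (-((n : ℝ) - 2 * i + 1) / 2) (n - i) i =
      ∑ j ∈ Finset.range (n + 1),
        (poch ((i : ℝ) - j + 1) (n - 2 * i) / (Nat.factorial (n - 2 * i) : ℝ)) •
          ppoly (Fin N) ⟨0, by omega⟩ ⟨1, by omega⟩ (-((n : ℝ) - 2 * i + 1) / 2) (n - j) j ∧
    ∃ c : ℕ → ℚ, (∀ j : ℕ, n - 2 * i < j → c j = 0) ∧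
      omegaP (Fin N) ⟨0, by omega⟩ ⟨1, by omega⟩ (-((n : ℝ) - 2 * i + 1) / 2) (n - i) i =
        ∑ j ∈ Finset.range (n + 1),
          (c j : ℝ) • qpoly (Fin N) ⟨0, by omega⟩ ⟨1, by omega⟩
            (-((n : ℝ) - 2 * i + 1) / 2) (n - j) j := by
  have hω := omegaP_eq_sum_poch_smul_ppoly (Fin N) ⟨0, by omega⟩ ⟨1, by omega⟩ hne hi2
  set d := n - 2 * i
  set e : ℕ → ℚ := fun j => (ascPochhammer ℚ d).eval ((i : ℚ) - j + 1) / d ! with he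
  have he_cast (j : ℕ) : (e j : ℝ) = poch ((i : ℝ) - j + 1) d / d ! := by
    simp only [he]
    push_cast [ratCast_ascPochhammer_eval]
    rfl
  refine ⟨hω, fun j => krawInv n (fun b => e (n - b)) (n - j), fun j hj => ?_, ?_⟩
  · refine krawInv_eq_zero (Polynomial.C ((d ! : ℚ)⁻¹) * ascPochhammer ℚ d) ((i : ℚ) + 1 - n)
      (fun b hb => ?_) ?_
    · simp only [he, Polynomial.eval_mul, Polynomial.eval_C, Nat.cast_sub hb]
      ring_nf
    · calc _ ≤ d := (Polynomial.natDegree_C_mul_le _ _).trans (ascPochhammer_natDegree ℚ d).le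
        _ < n - (n - j) := by omega
  · simp only [hω, ← he_cast]
    exact sum_smul_ppoly_eq_sum_krawInv_smul_qpoly _ _ _ _ n e
end
end

section
/- Let l ∈ ℕ₀ and κ = −l−1/2. Then: (a) A_n(u; −l−1/2) = 0 when n is odd; (b) A_{2j}(u; −l−1/2) = [(−l−1/2)_j / j!] (1−u)^{2l+1−2j} for all j ≥ 0, which for 2j ≤ 2l is a polynomial in u of degree 2l+1−2j; (c) B_n(u; −l−1/2) = [(−l+1/2)_{⌊n/2⌋} / ⌊n/2⌋!] (1−u)^{2l−n} for all n ≥ 0, which for n ≤ 2l is a polynomial in u of degree 2l−n. -/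
open MvPolynomial

noncomputable section

/-!
Put `v = (1 - u) w`. Since `1 - (u ± v) = (1 - u)(1 ∓ w)`,
`(1 - (u + v))^(-κ₁) (1 - (u - v))^(-κ₂) = (1 - u)^(-κ₁-κ₂) · (1 - w)^(-κ₁) (1 + w)^(-κ₂)`,
so the coefficient of `v^n` is `c_n (1 - u)^(-κ₁-κ₂-n)` with `c_n` the coefficient of `w^n` in
`h = (1 - w)^(-κ₁) (1 + w)^(-κ₂)`. Coefficientwise this rests on
`(κ)_{p+q} / (p! q!) = (κ)_p / p! · (κ+p)_q / q!` and on
`(1 - u)^(-α) (1 - u)^(-β) = (1 - u)^(-α-β)`; the latter, like `(1 - u)^(-α) = (1 - u)^N` for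
`α = -N`, holds because both sides solve `(1 - u) f' = α f` with `f(0) = 1`.

The series `h` solves `(1 - w²) h' = ((κ₁ - κ₂) + (κ₁ + κ₂) w) h`, a two-step recurrence for `c_n`,
whose solution is `[n even] (κ)_{n/2} / (n/2)!` for `A` (`κ₁ = κ₂ = κ`) and
`(κ+1)_{⌊n/2⌋} / ⌊n/2⌋!` for `B` (`κ₁ = κ + 1`, `κ₂ = κ`). At `κ = -l - 1/2` the exponent
`-κ₁ - κ₂` is `2l + 1`, resp. `2l`, and no Pochhammer factor vanishes since `κ` is not an integer.
-/

lemma eq_of_two_step_recurrence {a b : ℝ} (x y : ℕ → ℝ)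
    (hx : ∀ n : ℕ, (n + 2) * x (n + 2) = a * x (n + 1) + (b + n) * x n)
    (hy : ∀ n : ℕ, (n + 2) * y (n + 2) = a * y (n + 1) + (b + n) * y n)
    (h0 : x 0 = y 0) (h1 : x 1 = y 1) : x = y := by
  suffices h : ∀ n, x n = y n ∧ x (n + 1) = y (n + 1) from funext fun n => (h n).1
  intro n
  induction n with
  | zero => exact ⟨h0, h1⟩
  | succ n ih =>
    refine ⟨ih.2, mul_left_cancel₀ (by positivity : (n + 2 : ℝ) ≠ 0) ?_⟩
    rw [hx, hy, ih.1, ih.2]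

namespace PowerSeries

/-- The coefficient of `X^k` in `(1 - X)^(-α)`. -/
def negBinomCoeff (α : ℝ) (k : ℕ) : ℝ := poch α k / k.factorial

def negBinom (α : ℝ) : ℝ⟦X⟧ := mk (negBinomCoeff α)

def negBinomPair (κ₁ κ₂ : ℝ) : ℝ⟦X⟧ := negBinom κ₁ * rescale (-1) (negBinom κ₂)

lemma negBinomCoeff_zero (α : ℝ) : negBinomCoeff α 0 = 1 := by simp [negBinomCoeff, poch]

lemma succ_mul_negBinomCoeff_succ (α : ℝ) (k : ℕ) :
    (k + 1) * negBinomCoeff α (k + 1) = (α + k) * negBinomCoeff α k := by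
  have hk : (k.factorial : ℝ) ≠ 0 := by positivity
  simp only [negBinomCoeff, poch, ascPochhammer_succ_eval, Nat.factorial_succ, Nat.cast_mul]
  field_simp
  push_cast
  ring

lemma negBinomCoeff_add_mul_choose (α : ℝ) (p q : ℕ) :
    negBinomCoeff α (p + q) * (p + q).choose q = negBinomCoeff α p * negBinomCoeff (α + p) q := by
  have hpoch : poch α (p + q) = poch α p * poch (α + p) q := by
    simp only [poch, ← ascPochhammer_mul, Polynomial.eval_mul, Polynomial.eval_comp,
      Polynomial.eval_add, Polynomial.eval_X, Polynomial.eval_natCast]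
  have hfact := Nat.add_choose_mul_factorial_mul_factorial p q
  have hp : (p.factorial : ℝ) ≠ 0 := by positivity
  have hq : (q.factorial : ℝ) ≠ 0 := by positivity
  have hc : ((p + q).choose q : ℝ) ≠ 0 := by exact_mod_cast (Nat.choose_pos (by omega)).ne'
  simp only [negBinomCoeff, hpoch, ← hfact]
  push_cast
  field_simp

lemma negBinomCoeff_intCast_add_half_ne_zero (z : ℤ) (j : ℕ) :
    negBinomCoeff (z + 1 / 2) j ≠ 0 := by
  refine div_ne_zero ?_ (by positivity)
  rw [poch, Ne, ascPochhammer_eval_eq_zero_iff]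
  rintro ⟨k, -, hk⟩
  have h2 : ((2 * k : ℤ) : ℝ) = ((-2 * z - 1 : ℤ) : ℝ) := by
    push_cast
    linarith
  have := Int.cast_injective h2
  omega

lemma coeff_one_sub_X_mul_derivative (f : ℝ⟦X⟧) (n : ℕ) :
    coeff n ((1 - X) * d⁄dX ℝ f) = (n + 1) * coeff (n + 1) f - n * coeff n f := by
  rcases n with _ | n <;>
  · simp only [sub_mul, one_mul, map_sub, coeff_zero_X_mul, coeff_succ_X_mul, coeff_derivative]
    push_cast
    ring

lemma one_sub_X_mul_derivative_negBinom (α : ℝ) :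
    (1 - X) * d⁄dX ℝ (negBinom α) = C α * negBinom α := by
  ext n
  rw [coeff_one_sub_X_mul_derivative, coeff_C_mul]
  simp only [negBinom, coeff_mk]
  linear_combination succ_mul_negBinomCoeff_succ α n

lemma eq_C_mul_negBinom_of_derivative {α : ℝ} {f : ℝ⟦X⟧}
    (hf : (1 - X) * d⁄dX ℝ f = C α * f) : f = C (constantCoeff f) * negBinom α := by
  ext n
  rw [coeff_C_mul, negBinom, coeff_mk]
  induction n with
  | zero => simp [negBinomCoeff_zero]
  | succ n ih =>
    have hn := congrArg (coeff n) hf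
    rw [coeff_one_sub_X_mul_derivative, coeff_C_mul] at hn
    apply mul_left_cancel₀ (by positivity : (n + 1 : ℝ) ≠ 0)
    linear_combination hn + (α + n) * ih - constantCoeff f * succ_mul_negBinomCoeff_succ α n

lemma negBinom_add (α β : ℝ) : negBinom (α + β) = negBinom α * negBinom β := by
  have hode : (1 - X) * d⁄dX ℝ (negBinom α * negBinom β) =
      C (α + β) * (negBinom α * negBinom β) := by
    rw [Derivation.leibniz, smul_eq_mul, smul_eq_mul, map_add]
    linear_combination negBinom α * one_sub_X_mul_derivative_negBinom β +
      negBinom β * one_sub_X_mul_derivative_negBinom α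
  rw [eq_C_mul_negBinom_of_derivative hode]
  simp [negBinom, constantCoeff_mk, negBinomCoeff_zero]

lemma negBinom_neg_natCast (N : ℕ) : negBinom (-N) = (1 - X) ^ N := by
  have hode : (1 - X) * d⁄dX ℝ ((1 - X : ℝ⟦X⟧) ^ N) = C (-N : ℝ) * (1 - X) ^ N := by
    rw [derivative_pow, map_sub, derivative_one, derivative_X, map_neg, map_natCast]
    rcases N with _ | N
    · simp
    · push_cast
      ring
  rw [eq_C_mul_negBinom_of_derivative hode]
  simp

lemma negBinom_add_natCast_mul_one_sub_X_pow (α : ℝ) (n : ℕ) :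
    negBinom (α + n) * (1 - X) ^ n = negBinom α := by
  rw [← negBinom_neg_natCast, ← negBinom_add, add_neg_cancel_right]

lemma derivative_rescale (a : ℝ) (f : ℝ⟦X⟧) :
    d⁄dX ℝ (rescale a f) = C a * rescale a (d⁄dX ℝ f) := by
  ext n
  simp only [coeff_derivative, coeff_rescale, coeff_C_mul]
  ring

lemma one_add_X_mul_derivative_rescale_negBinom (β : ℝ) :
    (1 + X) * d⁄dX ℝ (rescale (-1) (negBinom β)) = C (-β) * rescale (-1) (negBinom β) := by
  have h := congrArg (rescale (-1 : ℝ)) (one_sub_X_mul_derivative_negBinom β)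
  have hC : rescale (-1 : ℝ) (C β) = C β := by
    ext n
    rcases n with _ | n <;> simp [coeff_rescale, coeff_C]
  simp only [map_mul, map_sub, map_one, rescale_X, hC, map_neg, neg_mul, one_mul,
    sub_neg_eq_add] at h
  rw [derivative_rescale, map_neg, map_one, neg_one_mul, mul_neg, h, map_neg, neg_mul]

lemma one_sub_X_sq_mul_derivative_negBinomPair (κ₁ κ₂ : ℝ) :
    (1 - X ^ 2) * d⁄dX ℝ (negBinomPair κ₁ κ₂) =
      (C (κ₁ - κ₂) + C (κ₁ + κ₂) * X) * negBinomPair κ₁ κ₂ := by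
  have h₂ := one_add_X_mul_derivative_rescale_negBinom κ₂
  rw [map_neg] at h₂
  rw [negBinomPair, Derivation.leibniz, smul_eq_mul, smul_eq_mul, map_sub, map_add]
  linear_combination (1 - X) * negBinom κ₁ * h₂ +
    (1 + X) * rescale (-1) (negBinom κ₂) * one_sub_X_mul_derivative_negBinom κ₁

lemma coeff_succ_one_sub_X_sq_mul_derivative (h : ℝ⟦X⟧) (n : ℕ) :
    coeff (n + 1) ((1 - X ^ 2) * d⁄dX ℝ h) = (n + 2) * coeff (n + 2) h - n * coeff n h := by
  rw [sub_mul, one_mul, map_sub, coeff_X_pow_mul', coeff_derivative]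
  rcases n with _ | n
  · norm_num
    ring
  · rw [if_pos (by omega), show n + 1 + 1 - 2 = n by omega, coeff_derivative]
    push_cast
    ring

lemma coeff_recurrence_of_one_sub_X_sq_mul_derivative {a b : ℝ} {h : ℝ⟦X⟧}
    (hode : (1 - X ^ 2) * d⁄dX ℝ h = (C a + C b * X) * h) :
    coeff 1 h = a * coeff 0 h ∧ ∀ n : ℕ,
      (n + 2) * coeff (n + 2) h = a * coeff (n + 1) h + (b + n) * coeff n h := by
  constructor
  · have h0 := congrArg (coeff 0) hode
    simp only [sub_mul, one_mul, map_sub, coeff_X_pow_mul', coeff_derivative, add_mul,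
      map_add, coeff_C_mul, mul_assoc, coeff_zero_X_mul] at h0
    simpa [mul_comm] using h0
  · intro n
    have hn := congrArg (coeff (n + 1)) hode
    rw [coeff_succ_one_sub_X_sq_mul_derivative] at hn
    simp only [add_mul, map_add, coeff_C_mul, mul_assoc, coeff_succ_X_mul] at hn
    linear_combination hn

lemma coeff_zero_negBinomPair (κ₁ κ₂ : ℝ) : coeff 0 (negBinomPair κ₁ κ₂) = 1 := by
  rw [negBinomPair, coeff_zero_eq_constantCoeff_apply, map_mul,
    ← coeff_zero_eq_constantCoeff_apply, ← coeff_zero_eq_constantCoeff_apply, coeff_rescale]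
  simp [negBinom, negBinomCoeff_zero]

lemma coeff_negBinomPair_self (κ : ℝ) (n : ℕ) :
    coeff n (negBinomPair κ κ) = if Even n then negBinomCoeff κ (n / 2) else 0 := by
  obtain ⟨h1, hrec⟩ := coeff_recurrence_of_one_sub_X_sq_mul_derivative
    (one_sub_X_sq_mul_derivative_negBinomPair κ κ)
  refine congrFun (eq_of_two_step_recurrence (fun k => coeff k _)
    (fun k => if Even k then negBinomCoeff κ (k / 2) else 0) hrec (fun n => ?_) ?_ ?_) n
  · rcases Nat.even_or_odd' n with ⟨t, rfl | rfl⟩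
    · simp only [show 2 * t + 2 = 2 * (t + 1) by ring, even_two_mul, if_true,
        Nat.mul_div_cancel_left _ two_pos]
      push_cast
      linear_combination 2 * succ_mul_negBinomCoeff_succ κ t
    · simp only [show 2 * t + 1 + 2 = 2 * (t + 1) + 1 by ring, Nat.not_even_two_mul_add_one,
        if_false]
      ring
  · simp [coeff_zero_negBinomPair, negBinomCoeff_zero]
  · simp [h1]

lemma coeff_negBinomPair_add_one (κ : ℝ) (n : ℕ) :
    coeff n (negBinomPair (κ + 1) κ) = negBinomCoeff (κ + 1) (n / 2) := by
  obtain ⟨h1, hrec⟩ := coeff_recurrence_of_one_sub_X_sq_mul_derivative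
    (one_sub_X_sq_mul_derivative_negBinomPair (κ + 1) κ)
  refine congrFun (eq_of_two_step_recurrence (fun k => coeff k _)
    (fun k => negBinomCoeff (κ + 1) (k / 2)) hrec (fun n => ?_) ?_ ?_) n
  · have ht := succ_mul_negBinomCoeff_succ (κ + 1) (n / 2)
    rcases Nat.even_or_odd' n with ⟨t, rfl | rfl⟩
    · rw [show (2 * t + 2) / 2 = t + 1 by omega, show (2 * t + 1) / 2 = t by omega,
        show 2 * t / 2 = t by omega] at *
      push_cast
      linear_combination 2 * ht
    · rw [show (2 * t + 1 + 2) / 2 = t + 1 by omega, show (2 * t + 1 + 1) / 2 = t + 1 by omega,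
        show (2 * t + 1) / 2 = t by omega] at *
      push_cast
      linear_combination 2 * ht
  · simp [coeff_zero_negBinomPair, negBinomCoeff_zero]
  · simp [h1, coeff_zero_negBinomPair, negBinomCoeff_zero]

/-- The coefficient of `v^n` in `(1 - (u + v))^(-κ₁) (1 - (u - v))^(-κ₂)`, as a power series
in `u`. -/
def vCoeffSeries (κ₁ κ₂ : ℝ) (n : ℕ) : ℝ⟦X⟧ :=
  mk fun m =>
    ∑ k ∈ Finset.range (m + n + 1),
      negBinomCoeff κ₁ k * negBinomCoeff κ₂ (m + n - k) *
        ∑ a ∈ Finset.range (m + 1),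
          (k.choose a : ℝ) * ((m + n - k).choose (m - a) : ℝ) *
            (-1 : ℝ) ^ ((m + n - k) - (m - a))

lemma Aser_eq_vCoeffSeries (κ : ℝ) : Aser κ = vCoeffSeries κ κ := rfl

lemma Bser_eq_vCoeffSeries (κ : ℝ) : Bser κ = vCoeffSeries (κ + 1) κ := rfl

open Finset in
/-- Reindexed by `k = p.1 + q.1`, `a = q.1`, where `u^q.1 v^p.1` comes from the expansion of
`(1 - (u + v))^(-κ₁)` and `u^q.2 v^p.2` from that of `(1 - (u - v))^(-κ₂)`. -/
lemma coeff_vCoeffSeries (κ₁ κ₂ : ℝ) (n m : ℕ) :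
    coeff m (vCoeffSeries κ₁ κ₂ n) =
      ∑ p ∈ antidiagonal n, ∑ q ∈ antidiagonal m,
        negBinomCoeff κ₁ (p.1 + q.1) * (p.1 + q.1).choose q.1 *
          (negBinomCoeff κ₂ (p.2 + q.2) * (p.2 + q.2).choose q.2) * (-1) ^ p.2 := by
  set T : ℕ → ℕ → ℝ := fun k a => negBinomCoeff κ₁ k * negBinomCoeff κ₂ (m + n - k) *
    ((k.choose a : ℝ) * ((m + n - k).choose (m - a) : ℝ) * (-1 : ℝ) ^ ((m + n - k) - (m - a)))
  have hlhs : coeff m (vCoeffSeries κ₁ κ₂ n) =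
      ∑ a ∈ range (m + 1), ∑ k ∈ range (m + n + 1), T k a := by
    rw [vCoeffSeries, coeff_mk, sum_comm]
    simp only [T, mul_sum]
  have hshift : ∀ a ∈ range (m + 1),
      ∑ k ∈ range (m + n + 1), T k a = ∑ i ∈ range (n + 1), T (i + a) a := by
    intro a ha
    rw [mem_range] at ha
    rw [range_eq_Ico, range_eq_Ico, sum_Ico_add' (fun k => T k a), zero_add]
    refine (sum_subset (fun k hk => ?_) fun k hk hk' => ?_).symm
    · simp only [mem_Ico] at hk ⊢
      omega
    · simp only [mem_Ico, not_and_or, not_le, not_lt] at hk hk'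
      rcases hk' with hk' | hk'
      · simp [T, Nat.choose_eq_zero_of_lt hk']
      · simp [T, Nat.choose_eq_zero_of_lt (show m + n - k < m - a by omega)]
  rw [hlhs, sum_congr rfl hshift]
  conv_rhs => rw [sum_comm, Nat.sum_antidiagonal_eq_sum_range_succ_mk]
  refine sum_congr rfl fun a ha => ?_
  rw [Nat.sum_antidiagonal_eq_sum_range_succ_mk]
  refine sum_congr rfl fun i hi => ?_
  rw [mem_range] at ha hi
  simp only [T]
  rw [show m + n - (i + a) = n - i + (m - a) by omega, Nat.add_sub_cancel]
  ring

open Finset in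
theorem vCoeffSeries_eq (κ₁ κ₂ : ℝ) (n : ℕ) :
    vCoeffSeries κ₁ κ₂ n = C (coeff n (negBinomPair κ₁ κ₂)) * negBinom (κ₁ + κ₂ + n) := by
  ext m
  rw [coeff_vCoeffSeries, coeff_C_mul, negBinomPair, coeff_mul, sum_mul]
  refine sum_congr rfl fun p hp => ?_
  have hsplit : negBinom (κ₁ + κ₂ + n) = negBinom (κ₁ + p.1) * negBinom (κ₂ + p.2) := by
    rw [← negBinom_add, ← mem_antidiagonal.mp hp]
    push_cast
    ring_nf
  rw [hsplit, coeff_mul, mul_sum]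
  refine sum_congr rfl fun q _ => ?_
  rw [negBinomCoeff_add_mul_choose, negBinomCoeff_add_mul_choose]
  simp only [negBinom, coeff_mk, coeff_rescale]
  ring

lemma exists_polynomial_coe_eq_C_mul_one_sub_X_pow {c : ℝ} (hc : c ≠ 0) (N : ℕ) :
    ∃ P : Polynomial ℝ, (P : ℝ⟦X⟧) = C c * (1 - X) ^ N ∧ P.natDegree = N :=
  ⟨Polynomial.C c * (1 - Polynomial.X) ^ N, by simp, by compute_degree!⟩

lemma Aser_of_odd (κ : ℝ) {n : ℕ} (hn : Odd n) : Aser κ n = 0 := by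
  rw [Aser_eq_vCoeffSeries, vCoeffSeries_eq, coeff_negBinomPair_self,
    if_neg (Nat.not_even_iff_odd.mpr hn), map_zero, zero_mul]

lemma Aser_two_mul (κ : ℝ) (j : ℕ) :
    Aser κ (2 * j) = C (negBinomCoeff κ j) * negBinom (κ + κ + (2 * j : ℕ)) := by
  rw [Aser_eq_vCoeffSeries, vCoeffSeries_eq, coeff_negBinomPair_self,
    if_pos (even_two_mul j), Nat.mul_div_cancel_left _ two_pos]

lemma Aser_two_mul_mul_one_sub_X_pow {κ : ℝ} {N : ℕ} (hN : κ + κ = -N) (j : ℕ) :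
    Aser κ (2 * j) * (1 - X) ^ (2 * j) = C (negBinomCoeff κ j) * (1 - X) ^ N := by
  rw [Aser_two_mul, mul_assoc, negBinom_add_natCast_mul_one_sub_X_pow, hN, negBinom_neg_natCast]

lemma exists_polynomial_coe_eq_Aser_two_mul {κ : ℝ} {j N : ℕ} (hN : κ + κ + 2 * j = -N)
    (hκ : negBinomCoeff κ j ≠ 0) :
    ∃ P : Polynomial ℝ, (P : ℝ⟦X⟧) = Aser κ (2 * j) ∧ P.natDegree = N := by
  rw [Aser_two_mul]
  push_cast
  rw [hN, negBinom_neg_natCast]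
  exact exists_polynomial_coe_eq_C_mul_one_sub_X_pow hκ N

lemma Bser_eq (κ : ℝ) (n : ℕ) :
    Bser κ n = C (negBinomCoeff (κ + 1) (n / 2)) * negBinom (κ + 1 + κ + n) := by
  rw [Bser_eq_vCoeffSeries, vCoeffSeries_eq, coeff_negBinomPair_add_one]

lemma Bser_mul_one_sub_X_pow {κ : ℝ} {N : ℕ} (hN : κ + 1 + κ = -N) (n : ℕ) :
    Bser κ n * (1 - X) ^ n = C (negBinomCoeff (κ + 1) (n / 2)) * (1 - X) ^ N := by
  rw [Bser_eq, mul_assoc, negBinom_add_natCast_mul_one_sub_X_pow, hN, negBinom_neg_natCast]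

lemma exists_polynomial_coe_eq_Bser {κ : ℝ} {n N : ℕ} (hN : κ + 1 + κ + n = -N)
    (hκ : negBinomCoeff (κ + 1) (n / 2) ≠ 0) :
    ∃ P : Polynomial ℝ, (P : ℝ⟦X⟧) = Bser κ n ∧ P.natDegree = N := by
  rw [Bser_eq, hN, negBinom_neg_natCast]
  exact exists_polynomial_coe_eq_C_mul_one_sub_X_pow hκ N

end PowerSeries

/-- Let `κ = −l−1/2`.  (a) `Aₙ(u;κ) = 0` for odd `n`;
(b) `A_{2j}(u;κ) = [(−l−1/2)ⱼ/j!](1−u)^{2l+1−2j}` for all `j ≥ 0` (stated multiplicatively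
to make sense of negative exponents), and for `2j ≤ 2l` it is a polynomial in `u` of
degree `2l+1−2j`; (c) `Bₙ(u;κ) = [(−l+1/2)_{⌊n/2⌋}/⌊n/2⌋!](1−u)^{2l−n}` for all `n ≥ 0`,
and for `n ≤ 2l` it is a polynomial in `u` of degree `2l−n`. -/
theorem AB_series_polynomial (l : ℕ) :
    (∀ n : ℕ, Odd n → Aser (-(l : ℝ) - 1 / 2) n = 0) ∧
    ((∀ j : ℕ,
        Aser (-(l : ℝ) - 1 / 2) (2 * j) * (1 - PowerSeries.X) ^ (2 * j) =
          PowerSeries.C (poch (-(l : ℝ) - 1 / 2) j / (Nat.factorial j : ℝ)) *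
            (1 - PowerSeries.X) ^ (2 * l + 1)) ∧
      ∀ j : ℕ, 2 * j ≤ 2 * l →
        ∃ P : Polynomial ℝ, (P : PowerSeries ℝ) = Aser (-(l : ℝ) - 1 / 2) (2 * j) ∧
          P.natDegree = 2 * l + 1 - 2 * j) ∧
    ((∀ n : ℕ,
        Bser (-(l : ℝ) - 1 / 2) n * (1 - PowerSeries.X) ^ n =
          PowerSeries.C (poch (-(l : ℝ) + 1 / 2) (n / 2) / (Nat.factorial (n / 2) : ℝ)) *
            (1 - PowerSeries.X) ^ (2 * l)) ∧
      ∀ n : ℕ, n ≤ 2 * l →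
        ∃ P : Polynomial ℝ, (P : PowerSeries ℝ) = Bser (-(l : ℝ) - 1 / 2) n ∧
          P.natDegree = 2 * l - n) := by
  have hκ_ne : ∀ j, PowerSeries.negBinomCoeff (-(l : ℝ) - 1 / 2) j ≠ 0 := fun j => by
    convert PowerSeries.negBinomCoeff_intCast_add_half_ne_zero (-l - 1) j using 2
    push_cast
    ring
  have hκ1_ne : ∀ j, PowerSeries.negBinomCoeff (-(l : ℝ) - 1 / 2 + 1) j ≠ 0 := fun j => by
    convert PowerSeries.negBinomCoeff_intCast_add_half_ne_zero (-l) j using 2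
    push_cast
    ring
  have hκ1 : -(l : ℝ) - 1 / 2 + 1 = -(l : ℝ) + 1 / 2 := by ring
  refine ⟨fun n => PowerSeries.Aser_of_odd _, ⟨fun j => ?_, fun j hj => ?_⟩,
    fun n => ?_, fun n hn => ?_⟩
  · exact PowerSeries.Aser_two_mul_mul_one_sub_X_pow (by push_cast; ring) j
  · exact PowerSeries.exists_polynomial_coe_eq_Aser_two_mul
      (by push_cast [Nat.cast_sub (show 2 * j ≤ 2 * l + 1 by omega)]; ring) (hκ_ne j)
  · rw [← hκ1]
    exact PowerSeries.Bser_mul_one_sub_X_pow (N := 2 * l) (by push_cast; ring) n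
  · exact PowerSeries.exists_polynomial_coe_eq_Bser
      (by push_cast [Nat.cast_sub hn]; ring) (hκ1_ne (n / 2))
end
end

section
/- Let N ≥ 2, let a_N(x) = ∏_{1≤i<j≤N} (x_i − x_j) be the alternating polynomial, and let l ∈ ℕ₀. Then for each 1 ≤ i ≤ N, D_i(a_N^{2l+1}) = (2l+1+2κ) · a_N^{2l} · ∂a_N/∂x_i. In particular, for κ = −l−1/2 one has D_i(a_N^{2l+1}) = 0 for all i, so a_N^{2l+1} is a singular polynomial for the parameter value κ = −l−1/2. -/
open MvPolynomial

noncomputable section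

/-! Since `a_N` changes sign under every transposition (it is `±` the Vandermonde determinant),
so does `f = a_N^{2l+1}`, and then `f - (i,j) f = 2 f`: the Dunkl operator becomes
`Dᵢ f = ∂ᵢ f + 2κ f ∑_{j≠i} 1/(xᵢ - xⱼ)`. Logarithmic differentiation of `a_N = ∏_{i<j} (xᵢ - xⱼ)`
gives `a_N ∑_{j≠i} 1/(xᵢ - xⱼ) = ∂ᵢ a_N`, so both terms are multiples of `a_N^{2l} ∂ᵢ a_N`, with
coefficients `2l+1` and `2κ`. -/

open Finset

theorem Derivation.map_prod_eq_mul_sum_div {R A K ι : Type*} [CommSemiring R] [CommRing A]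
    [Algebra R A] [Field K] (D : Derivation R A A) (φ : A →+* K) (s : Finset ι) (f : ι → A)
    (hf : ∀ p ∈ s, φ (f p) ≠ 0) :
    φ (D (∏ p ∈ s, f p)) = φ (∏ p ∈ s, f p) * ∑ p ∈ s, φ (D (f p)) / φ (f p) := by
  classical
  induction s using Finset.induction_on with
  | empty => simp
  | insert x s hx ih =>
    have hfx := hf x (mem_insert_self x s)
    rw [prod_insert hx, Derivation.leibniz, sum_insert hx, smul_eq_mul, smul_eq_mul, map_add,
      map_mul, map_mul, ih fun p hp => hf p (mem_insert_of_mem hp), map_mul]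
    field_simp
    ring

section Dunkl

variable {σ : Type}

local notation "ι" => algebraMap (MvPolynomial σ ℝ) (FractionRing (MvPolynomial σ ℝ))

theorem algebraMap_X_sub_X_ne_zero {a b : σ} (h : a ≠ b) :
    ι (X a - X b) ≠ 0 :=
  (map_ne_zero_iff _ (IsFractionRing.injective _ _)).mpr
    (sub_ne_zero.mpr fun e => h (X_injective e))

variable [Fintype σ] [DecidableEq σ]

theorem dunkl_of_rename_swap_eq_neg (κ : ℝ) (i : σ) {f : MvPolynomial σ ℝ}
    (hf : ∀ j ≠ i, rename (Equiv.swap i j) f = -f) :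
    dunkl σ κ i f =
      ι (pderiv i f) + ι (C κ) * (2 * ∑ j ∈ univ.erase i, ι f / ι (X i - X j)) := by
  rw [dunkl]
  congr 2
  rw [mul_sum]
  refine sum_congr rfl fun j hj => ?_
  rw [hf j (ne_of_mem_erase hj), sub_neg_eq_add, ← two_mul, map_mul, map_ofNat, mul_div_assoc]

end Dunkl

section AltPoly

variable {N : ℕ}

local notation "ι" =>
  algebraMap (MvPolynomial (Fin N) ℝ) (FractionRing (MvPolynomial (Fin N) ℝ))

theorem altPoly_ne_zero : altPoly N ≠ 0 :=
  prod_ne_zero_iff.mpr fun _ hp =>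
    sub_ne_zero.mpr fun e => (mem_filter.mp hp).2.ne (X_injective e)

theorem altPoly_eq_sign_mul_det_vandermonde :
    altPoly N = (-1) ^ (∑ a : Fin N, (Ioi a).card) * (Matrix.vandermonde X).det := by
  rw [Matrix.det_vandermonde, ← prod_pow_eq_pow_sum, ← prod_mul_distrib, altPoly, prod_filter,
    Fintype.prod_prod_type]
  refine prod_congr rfl fun a _ => ?_
  rw [← prod_const, ← prod_mul_distrib, ← prod_filter]
  exact prod_congr (by ext; simp) fun b _ => by ring

theorem rename_swap_altPoly {i j : Fin N} (h : i ≠ j) :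
    rename (Equiv.swap i j) (altPoly N) = -altPoly N := by
  set V := Matrix.vandermonde (X : Fin N → MvPolynomial (Fin N) ℝ)
  have hdet : rename (Equiv.swap i j) V.det = -V.det := by
    have hV : V.map (rename (Equiv.swap i j)) = V.submatrix (Equiv.swap i j) id := by
      ext a b
      simp [V, Matrix.vandermonde_apply]
    rw [AlgHom.map_det, AlgHom.mapMatrix_apply, hV, Matrix.det_permute, Equiv.Perm.sign_swap h]
    simp
  rw [altPoly_eq_sign_mul_det_vandermonde, map_mul, map_pow, map_neg, map_one, hdet]
  ring

theorem pderiv_X_sub_X_div {a b : Fin N} (i : Fin N) (h : a ≠ b) :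
    ι (pderiv i (X a - X b)) / ι (X a - X b) =
      (if a = i then (ι (X i - X b))⁻¹ else 0) + (if b = i then (ι (X i - X a))⁻¹ else 0) := by
  by_cases ha : a = i <;> by_cases hb : b = i
  · exact absurd (ha.trans hb.symm) h
  · subst ha
    simp [pderiv_X_of_ne hb, hb]
  · subst hb
    simp only [map_sub, pderiv_X_of_ne ha, pderiv_X, Pi.single_eq_same, zero_sub, map_neg,
      map_one, ha, ↓reduceIte, zero_add]
    rw [neg_div, ← div_neg, neg_sub, one_div]
  · simp [pderiv_X_of_ne ha, pderiv_X_of_ne hb, ha, hb]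

theorem algebraMap_pderiv_altPoly (i : Fin N) :
    ι (pderiv i (altPoly N)) = ∑ j ∈ univ.erase i, ι (altPoly N) / ι (X i - X j) := by
  have hfactor_ne_zero :
      ∀ p ∈ univ.filter (fun p : Fin N × Fin N => p.1 < p.2), ι (X p.1 - X p.2) ≠ 0 :=
    fun p hp => algebraMap_X_sub_X_ne_zero (mem_filter.mp hp).2.ne
  have hfirst : ∀ (u : Fin N → FractionRing (MvPolynomial (Fin N) ℝ)) (a b : Fin N),
      (if a < b then (if a = i then u b else 0) else 0)
        = if a = i then (if i < b then u b else 0) else 0 := by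
    intro u a b; split_ifs <;> simp_all
  have hsecond : ∀ (u : Fin N → FractionRing (MvPolynomial (Fin N) ℝ)) (a b : Fin N),
      (if a < b then (if b = i then u a else 0) else 0)
        = if b = i then (if a < i then u a else 0) else 0 := by
    intro u a b; split_ifs <;> simp_all
  simp only [div_eq_mul_inv, ← mul_sum]
  rw [altPoly, Derivation.map_prod_eq_mul_sum_div _ _ _ _ hfactor_ne_zero]
  congr 1
  rw [sum_congr rfl fun p hp => pderiv_X_sub_X_div i (mem_filter.mp hp).2.ne, sum_filter,
    Fintype.sum_prod_type]
  simp only [ite_add_zero, sum_add_distrib, hfirst fun b => (ι (X i - X b))⁻¹,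
    hsecond fun a => (ι (X i - X a))⁻¹, sum_ite_eq', sum_ite_irrel, mem_univ, if_true,
    sum_const_zero]
  rw [← filter_ne', sum_filter, ← sum_add_distrib]
  refine sum_congr rfl fun j _ => ?_
  rcases lt_trichotomy i j with h | rfl | h
  · simp [h, h.ne', h.not_gt]
  · simp
  · simp [h, h.ne, h.not_gt]

theorem dunkl_altPoly_pow_odd (κ : ℝ) (l : ℕ) (i : Fin N) :
    dunkl (Fin N) κ i (altPoly N ^ (2 * l + 1)) =
      ι (((2 * l + 1 : ℝ) + 2 * κ) • (altPoly N ^ (2 * l) * pderiv i (altPoly N))) := by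
  have hanti : ∀ j ≠ i,
      rename (Equiv.swap i j) (altPoly N ^ (2 * l + 1)) = -altPoly N ^ (2 * l + 1) :=
    fun j hj => by rw [map_pow, rename_swap_altPoly hj.symm, Odd.neg_pow ⟨l, rfl⟩]
  have hsum : ∑ j ∈ univ.erase i, ι (altPoly N ^ (2 * l + 1)) / ι (X i - X j)
      = ι (altPoly N ^ (2 * l)) * ι (pderiv i (altPoly N)) := by
    rw [algebraMap_pderiv_altPoly, mul_sum]
    exact sum_congr rfl fun j _ => by rw [pow_succ, map_mul, mul_div_assoc]
  rw [dunkl_of_rename_swap_eq_neg κ i hanti, hsum, ← map_ofNat ι 2, ← map_mul, ← map_mul,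
    ← map_mul, ← map_add, pderiv_pow, smul_eq_C_mul]
  congr 1
  simp only [map_add, map_mul, map_natCast, map_ofNat, map_one, add_tsub_cancel_right]
  push_cast
  ring

end AltPoly

theorem altPoly_singular_general (N : ℕ) (κ : ℝ) (l : ℕ) :
    (∀ i : Fin N,
        dunkl (Fin N) κ i (altPoly N ^ (2 * l + 1)) =
          algebraMap (MvPolynomial (Fin N) ℝ) (FractionRing (MvPolynomial (Fin N) ℝ))
            (((2 * l + 1 : ℝ) + 2 * κ) • (altPoly N ^ (2 * l) * pderiv i (altPoly N)))) ∧
    (κ = -(l : ℝ) - 1 / 2 →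
      (∀ i : Fin N, dunkl (Fin N) κ i (altPoly N ^ (2 * l + 1)) = 0) ∧
        altPoly N ^ (2 * l + 1) ≠ 0) := by
  refine ⟨dunkl_altPoly_pow_odd κ l, fun hκ => ⟨fun i => ?_, pow_ne_zero _ altPoly_ne_zero⟩⟩
  have hcoeff : (2 * l + 1 : ℝ) + 2 * κ = 0 := by rw [hκ]; ring
  rw [dunkl_altPoly_pow_odd, hcoeff, zero_smul, map_zero]

/-- For `N ≥ 2`, the alternating polynomial `a_N` satisfies
`Dᵢ(a_N^{2l+1}) = (2l+1+2κ) a_N^{2l} ∂a_N/∂xᵢ` for each `i`; in particular for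
`κ = −l−1/2` one has `Dᵢ(a_N^{2l+1}) = 0` for all `i` and `a_N^{2l+1} ≠ 0`,
so `a_N^{2l+1}` is a singular polynomial for `κ = −l−1/2`. -/
theorem altPoly_singular (N : ℕ) (hN : 2 ≤ N) (κ : ℝ) (l : ℕ) :
    (∀ i : Fin N,
        dunkl (Fin N) κ i (altPoly N ^ (2 * l + 1)) =
          algebraMap (MvPolynomial (Fin N) ℝ) (FractionRing (MvPolynomial (Fin N) ℝ))
            (((2 * l + 1 : ℝ) + 2 * κ) • (altPoly N ^ (2 * l) * pderiv i (altPoly N)))) ∧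
    (κ = -(l : ℝ) - 1 / 2 →
      (∀ i : Fin N, dunkl (Fin N) κ i (altPoly N ^ (2 * l + 1)) = 0) ∧
        altPoly N ^ (2 * l + 1) ≠ 0) :=
  altPoly_singular_general N κ l
end
end
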